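/- arXiv:2103.12167 — 4 statements merged into one kernel-verified Lean document; each statement's English description precedes it below -/
import Mathlib

section
/- Let φ : S₃ → PGL₂(ℂ) be an injective group homomorphism, so that S₃ acts faithfully on the complex projective line ℙ¹ through φ. Then the action has exactly three orbits consisting of points with nontrivial stabilizer, namely two orbits of cardinality 3 and one orbit of cardinality 2; every other orbit has cardinality 6 (is free). -/
open Matrix Projectivization
open scoped LinearAlgebra.Projectivization

set_option synthInstance.maxHeartbeats 1000000
set_option maxHeartbeats 1000000

noncomputable section

/-- The complex projective line `ℙ¹ = ℙ(ℂ²)`. -/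
abbrev ProjLine : Type := ℙ ℂ (Fin 2 → ℂ)

/-- The subgroup of scalar matrices in `GL₂(ℂ)`. -/
def ScalarSubgroup : Subgroup (GL (Fin 2) ℂ) :=
  (Units.map (algebraMap ℂ (Matrix (Fin 2) (Fin 2) ℂ)).toMonoidHom).range

lemma scalarSubgroup_central {s : GL (Fin 2) ℂ} (hs : s ∈ ScalarSubgroup)
    (g : GL (Fin 2) ℂ) : g * s = s * g := by
  obtain ⟨a, rfl⟩ := hs
  apply Units.ext
  show (g : Matrix (Fin 2) (Fin 2) ℂ) * algebraMap ℂ (Matrix (Fin 2) (Fin 2) ℂ) (a : ℂ)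
      = algebraMap ℂ (Matrix (Fin 2) (Fin 2) ℂ) (a : ℂ) * g
  exact (Algebra.commutes (a : ℂ) (g : Matrix (Fin 2) (Fin 2) ℂ)).symm

instance : ScalarSubgroup.Normal := by
  constructor
  intro s hs g
  rw [scalarSubgroup_central hs g, mul_assoc, mul_inv_cancel, mul_one]
  exact hs

/-- The projective general linear group `PGL₂(ℂ)`: the quotient of `GL₂(ℂ)` by the
subgroup of scalar matrices. -/
abbrev PGL2C : Type := GL (Fin 2) ℂ ⧸ ScalarSubgroup

/-- A matrix in `GL₂(ℂ)`, viewed as a linear automorphism of `ℂ²`. -/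
def glToLinEquiv : GL (Fin 2) ℂ ≃* ((Fin 2 → ℂ) ≃ₗ[ℂ] (Fin 2 → ℂ)) :=
  (Matrix.GeneralLinearGroup.toLin).trans
    (LinearMap.GeneralLinearGroup.generalLinearEquiv ℂ (Fin 2 → ℂ))

/-- The natural action of `GL₂(ℂ)` on the projective line `ℙ(ℂ²)`. -/
instance glMulActionProjLine : MulAction (GL (Fin 2) ℂ) ProjLine where
  smul g x := Projectivization.map (glToLinEquiv g).toLinearMap (glToLinEquiv g).injective x
  one_smul x := by
    induction x using Projectivization.ind with
    | h v hv =>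
      show Projectivization.map _ _ _ = _
      rw [Projectivization.map_mk, Projectivization.mk_eq_mk_iff']
      exact ⟨1, by simp [_root_.map_one]⟩
  mul_smul g h x := by
    induction x using Projectivization.ind with
    | h v hv =>
      show Projectivization.map _ _ _ = Projectivization.map _ _ (Projectivization.map _ _ _)
      rw [Projectivization.map_mk, Projectivization.map_mk, Projectivization.map_mk,
        Projectivization.mk_eq_mk_iff']
      exact ⟨1, by simp [_root_.map_mul]⟩

lemma gl_smul_def (g : GL (Fin 2) ℂ) (x : ProjLine) :
    g • x = Projectivization.map (glToLinEquiv g).toLinearMap (glToLinEquiv g).injective x :=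
  rfl

lemma scalar_smul_eq_self {s : GL (Fin 2) ℂ} (hs : s ∈ ScalarSubgroup) (x : ProjLine) :
    s • x = x := by
  obtain ⟨a, rfl⟩ := hs
  induction x using Projectivization.ind with
  | h v hv =>
    rw [gl_smul_def, Projectivization.map_mk, Projectivization.mk_eq_mk_iff']
    refine ⟨(a : ℂ), ?_⟩
    show (a : ℂ) • v = Matrix.mulVecLin _ v
    simp [Matrix.mulVecLin_apply, Matrix.algebraMap_eq_diagonal,
      Matrix.mulVec_diagonal, funext_iff, Pi.smul_apply, smul_eq_mul]

/-- The natural action of `PGL₂(ℂ)` on the projective line `ℙ(ℂ²)`. -/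
instance pglMulActionProjLine : MulAction PGL2C ProjLine where
  smul q x := Quotient.liftOn' q (fun g => g • x) (by
    intro a b hab
    have h : a⁻¹ * b ∈ ScalarSubgroup := QuotientGroup.leftRel_apply.mp hab
    calc a • x = a • ((a⁻¹ * b) • x) := by rw [scalar_smul_eq_self h]
      _ = (a * (a⁻¹ * b)) • x := (mul_smul _ _ _).symm
      _ = b • x := by rw [mul_inv_cancel_left])
  one_smul x := one_smul (GL (Fin 2) ℂ) x
  mul_smul q r x := by
    induction q using Quotient.inductionOn' with
    | h g =>
      induction r using Quotient.inductionOn' with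
      | h g' =>
        show (g * g') • x = g • g' • x
        exact mul_smul g g' x

variable {G : Type*} [Group G]

/-- The orbit of a point `x ∈ ℙ¹` under a group `G` acting on `ℙ¹` through a
homomorphism `φ : G →* PGL₂(ℂ)`. -/
def orbitThrough (φ : G →* PGL2C) (x : ProjLine) : Set ProjLine :=
  Set.range fun g : G => φ g • x

/-- The stabilizer subgroup in `G` of a point `x ∈ ℙ¹`, for `G` acting on `ℙ¹` through a
homomorphism `φ : G →* PGL₂(ℂ)`. -/
def stabilizerThrough (φ : G →* PGL2C) (x : ProjLine) : Subgroup G :=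
  Subgroup.comap φ (MulAction.stabilizer PGL2C x)

section Aux
abbrev M2 := Matrix (Fin 2) (Fin 2) ℂ

lemma cayley (A : M2) : A * A - (A.trace) • A + (A.det) • 1 = 0 := by
  ext i j
  fin_cases i <;> fin_cases j <;>
    simp [Matrix.mul_apply, Matrix.trace, Matrix.det_fin_two, Fin.sum_univ_two, Matrix.one_apply] <;> ring

lemma det_sub_smul (A : M2) (α : ℂ) : (A - α • 1).det = A.det - α * A.trace + α^2 := by
  simp [Matrix.det_fin_two, Matrix.trace, Fin.sum_univ_two, Matrix.one_apply]; ring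

lemma gl_mulVec_ne_zero (g : GL (Fin 2) ℂ) {v : Fin 2 → ℂ} (hv : v ≠ 0) :
    (g : M2).mulVec v ≠ 0 := by
  intro h0
  apply hv
  have h1 : ((g⁻¹ : GL (Fin 2) ℂ) : M2) * (g : M2) = 1 := by
    rw [← Units.val_mul, inv_mul_cancel]; rfl
  calc v = (((g⁻¹ : GL (Fin 2) ℂ) : M2) * (g : M2)).mulVec v := by rw [h1, Matrix.one_mulVec]
    _ = ((g⁻¹ : GL (Fin 2) ℂ) : M2).mulVec ((g : M2).mulVec v) := (Matrix.mulVec_mulVec _ _ _).symm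
    _ = 0 := by rw [h0, Matrix.mulVec_zero]

lemma pgl_smul_mk (g : GL (Fin 2) ℂ) {v : Fin 2 → ℂ} (hv : v ≠ 0) :
    (QuotientGroup.mk g : PGL2C) • Projectivization.mk ℂ v hv
      = Projectivization.mk ℂ ((g : M2).mulVec v) (gl_mulVec_ne_zero g hv) := by
  show g • Projectivization.mk ℂ v hv = _
  rw [gl_smul_def, Projectivization.map_mk]
  rfl

lemma smul_mk_self_iff (g : GL (Fin 2) ℂ) {v : Fin 2 → ℂ} (hv : v ≠ 0) :
    (QuotientGroup.mk g : PGL2C) • Projectivization.mk ℂ v hv = Projectivization.mk ℂ v hv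
      ↔ ∃ a : ℂ, (g : M2).mulVec v = a • v := by
  rw [pgl_smul_mk, Projectivization.mk_eq_mk_iff']
  exact ⟨fun ⟨a, ha⟩ => ⟨a, ha.symm⟩, fun ⟨a, ha⟩ => ⟨a, ha.symm⟩⟩
end Aux
lemma mulVecLin_inj {M N : M2} (h : M.mulVecLin = N.mulVecLin) : M = N := by
  have h2 : Matrix.toLin' M = Matrix.toLin' N := by
    rw [Matrix.toLin'_apply', Matrix.toLin'_apply']; exact h
  exact Matrix.toLin'.injective h2

lemma mem_scalar_of_smul_one {g : GL (Fin 2) ℂ} {a : ℂ} (ha : a ≠ 0)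
    (h : (g : M2) = a • 1) : g ∈ ScalarSubgroup := by
  refine ⟨Units.mk0 a ha, ?_⟩
  apply Units.ext
  show algebraMap ℂ M2 a = (g : M2)
  rw [h, Algebra.algebraMap_eq_smul_one]

/-- A nontrivial element of PGL₂(ℂ) fixes at most two points. -/
lemma eq_one_of_three_fixed {e : PGL2C} {x y z : ProjLine}
    (hxy : x ≠ y) (hxz : x ≠ z) (hyz : y ≠ z)
    (hx : e • x = x) (hy : e • y = y) (hz : e • z = z) : e = 1 := by
  obtain ⟨g, rfl⟩ := QuotientGroup.mk'_surjective ScalarSubgroup e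
  rw [QuotientGroup.mk'_apply] at *
  obtain ⟨v, hv, rfl⟩ : ∃ v hv, Projectivization.mk ℂ v hv = x :=
    ⟨x.rep, x.rep_nonzero, x.mk_rep⟩
  obtain ⟨w, hw, rfl⟩ : ∃ w hw, Projectivization.mk ℂ w hw = y :=
    ⟨y.rep, y.rep_nonzero, y.mk_rep⟩
  obtain ⟨u, hu, rfl⟩ : ∃ u hu, Projectivization.mk ℂ u hu = z :=
    ⟨z.rep, z.rep_nonzero, z.mk_rep⟩
  obtain ⟨a, hav⟩ := (smul_mk_self_iff g hv).mp hx
  obtain ⟨b, hbw⟩ := (smul_mk_self_iff g hw).mp hy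
  obtain ⟨c, hcu⟩ := (smul_mk_self_iff g hu).mp hz
  have ha0 : a ≠ 0 := by
    rintro rfl; rw [zero_smul] at hav; exact gl_mulVec_ne_zero g hv hav
  -- v, w linearly independent
  have hli : LinearIndependent ℂ ![v, w] := by
    rw [linearIndependent_fin2]
    refine ⟨hw, fun t ht => hxy ?_⟩
    rw [Projectivization.mk_eq_mk_iff']
    exact ⟨t, ht⟩
  have hcard : Fintype.card (Fin 2) = Module.finrank ℂ (Fin 2 → ℂ) := by simp
  let B := basisOfLinearIndependentOfCardEqFinrank hli hcard
  have hB : ∀ i, B i = ![v, w] i := fun i => by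
    rw [coe_basisOfLinearIndependentOfCardEqFinrank]
  have hrepr := B.sum_repr u
  rw [Fin.sum_univ_two, hB 0, hB 1] at hrepr
  simp only [Matrix.cons_val_zero, Matrix.cons_val_one, Matrix.head_cons] at hrepr
  obtain ⟨s, t, hrepr⟩ : ∃ s t : ℂ, s • v + t • w = u := ⟨_, _, hrepr⟩
  -- hrepr : s • v + t • w = u
  have hs0 : s ≠ 0 := by
    intro hse
    rw [hse, zero_smul, zero_add] at hrepr
    exact hyz (((Projectivization.mk_eq_mk_iff' ℂ w u hw hu).mpr ⟨t⁻¹, by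
      rw [← hrepr, smul_smul]
      rcases eq_or_ne t 0 with rfl | ht0
      · exact absurd hrepr.symm (by simpa using hu)
      · rw [inv_mul_cancel₀ ht0, one_smul]⟩))
  have ht0 : t ≠ 0 := by
    intro hte
    rw [hte, zero_smul, add_zero] at hrepr
    exact hxz ((Projectivization.mk_eq_mk_iff' ℂ v u hv hu).mpr ⟨s⁻¹, by
      rw [← hrepr, smul_smul, inv_mul_cancel₀ hs0, one_smul]⟩)
  -- compute g *ᵥ u two ways
  have hgu : (s * a) • v + (t * b) • w = (c * s) • v + (c * t) • w := by
    have h1 : (g : M2).mulVec u = (s * a) • v + (t * b) • w := by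
      rw [← hrepr, Matrix.mulVec_add, Matrix.mulVec_smul, Matrix.mulVec_smul, hav, hbw,
        smul_smul, smul_smul]
    have h2 : (g : M2).mulVec u = (c * s) • v + (c * t) • w := by
      rw [hcu, ← hrepr, smul_add, smul_smul, smul_smul]
    rw [← h1, h2]
  have hkey : ∀ i, ![s * a - c * s, t * b - c * t] i = 0 := by
    have := Fintype.linearIndependent_iff.mp hli ![s * a - c * s, t * b - c * t] ?_
    · exact this
    · rw [Fin.sum_univ_two]
      simp only [Matrix.cons_val_zero, Matrix.cons_val_one, Matrix.head_cons]
      linear_combination (norm := module) hgu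
  have hac : a = c := by
    have h0 := hkey 0
    simp only [Matrix.cons_val_zero] at h0
    have : s * a = c * s := by linear_combination h0
    rw [mul_comm c s] at this
    exact mul_left_cancel₀ hs0 this
  have hbc : b = c := by
    have h1 := hkey 1
    simp only [Matrix.cons_val_one, Matrix.head_cons, Matrix.cons_val_zero] at h1
    have : t * b = c * t := by linear_combination h1
    rw [mul_comm c t] at this
    exact mul_left_cancel₀ ht0 this
  -- g is scalar
  have hg : (g : M2) = a • 1 := by
    apply mulVecLin_inj
    apply B.ext
    intro i
    have hBv : B 0 = v := by rw [hB]; rfl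
    have hBw : B 1 = w := by rw [hB]; rfl
    fin_cases i
    · show ((g : M2).mulVecLin) (B 0) = ((a • 1 : M2).mulVecLin) (B 0)
      rw [hBv, Matrix.mulVecLin_apply, Matrix.mulVecLin_apply, Matrix.smul_mulVec,
        Matrix.one_mulVec, hav]
    · show ((g : M2).mulVecLin) (B 1) = ((a • 1 : M2).mulVecLin) (B 1)
      rw [hBw, Matrix.mulVecLin_apply, Matrix.mulVecLin_apply, Matrix.smul_mulVec,
        Matrix.one_mulVec, hbw, hbc, hac]
  rw [QuotientGroup.eq_one_iff]
  exact mem_scalar_of_smul_one ha0 hg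
lemma gl_det_ne_zero (g : GL (Fin 2) ℂ) : (g : M2).det ≠ 0 := by
  have : IsUnit (g : M2) := ⟨g, rfl⟩
  exact ((Matrix.isUnit_iff_isUnit_det _).mp this).ne_zero

lemma gl_not_scalar {g : GL (Fin 2) ℂ} (he : (QuotientGroup.mk g : PGL2C) ≠ 1) (a : ℂ) :
    (g : M2) ≠ a • 1 := by
  intro h
  have ha : a ≠ 0 := by
    intro h0
    apply gl_det_ne_zero g
    rw [h, h0, zero_smul, Matrix.det_zero]
  exact he ((QuotientGroup.eq_one_iff g).mpr (mem_scalar_of_smul_one ha h))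

lemma exists_two_fixed {e : PGL2C} (he : e ≠ 1) {n : ℕ} (hn : n = 2 ∨ n = 3)
    (hen : e ^ n = 1) :
    ∃ x y : ProjLine, x ≠ y ∧ e • x = x ∧ e • y = y := by
  obtain ⟨g, rfl⟩ := QuotientGroup.mk'_surjective ScalarSubgroup e
  rw [QuotientGroup.mk'_apply] at *
  have hpow : (QuotientGroup.mk (g ^ n) : PGL2C) = 1 := by
    rw [show (QuotientGroup.mk (g ^ n) : PGL2C) = (QuotientGroup.mk g : PGL2C) ^ n from
      map_pow (QuotientGroup.mk' ScalarSubgroup) g n, hen]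
  obtain ⟨u, hu⟩ := (QuotientGroup.eq_one_iff _).mp hpow
  obtain ⟨A, hAdef⟩ : ∃ A : M2, A = (g : M2) := ⟨_, rfl⟩
  obtain ⟨c, hcdef⟩ : ∃ c : ℂ, c = (u : ℂ) := ⟨_, rfl⟩
  have hc : A ^ n = c • 1 := by
    have h := congrArg Units.val hu
    simp only [Units.coe_map, Units.val_pow_eq_pow_val, RingHom.toMonoidHom_eq_coe,
      MonoidHom.coe_coe] at h
    rw [hAdef, hcdef, ← h, Algebra.algebraMap_eq_smul_one]
  obtain ⟨t, ht⟩ : ∃ t : ℂ, t = A.trace := ⟨_, rfl⟩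
  obtain ⟨d, hd⟩ : ∃ d : ℂ, d = A.det := ⟨_, rfl⟩
  have hd0 : d ≠ 0 := by rw [hd, hAdef]; exact gl_det_ne_zero g
  have hCH : A * A - t • A + d • 1 = 0 := by rw [ht, hd]; exact cayley A
  obtain ⟨s, hs⟩ := IsAlgClosed.exists_pow_nat_eq (k := ℂ) (t ^ 2 - 4 * d) (n := 2) (by norm_num)
  have hns : ∀ a : ℂ, A ≠ a • 1 := by rw [hAdef]; exact gl_not_scalar he
  rcases eq_or_ne s 0 with hs0 | hs0
  · exfalso
    rw [hs0] at hs
    have htd : t ^ 2 = 4 * d := by linear_combination -hs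
    have ht0 : t ≠ 0 := by
      intro h0; apply hd0; rw [h0] at htd; linear_combination (-(1:ℂ)/4) * htd
    have hAA : A * A = t • A - d • 1 := by linear_combination (norm := module) hCH
    rcases hn with rfl | rfl
    · have h2 : A ^ 2 = A * A := sq A
      have hta : t • A = (c + d) • 1 := by
        rw [h2] at hc
        linear_combination (norm := module) hc - hAA
      exact hns (t⁻¹ * (c + d)) (by
        rw [← smul_smul, ← hta, smul_smul, inv_mul_cancel₀ ht0, one_smul])
    · have h3 : A ^ 3 = A * (A * A) := by rw [pow_succ, pow_two, mul_assoc]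
      have hA3 : A * (A * A) = (t ^ 2 - d) • A - (t * d) • 1 := by
        rw [hAA, mul_sub, Matrix.mul_smul, Matrix.mul_smul, mul_one, hAA]
        module
      have hkey : (t ^ 2 - d) • A = (c + t * d) • 1 := by
        rw [h3, hA3] at hc
        linear_combination (norm := module) hc
      have h3d : t ^ 2 - d = 3 * d := by rw [htd]; ring
      have h3d0 : (3 : ℂ) * d ≠ 0 := by simp [hd0]
      exact hns ((3 * d)⁻¹ * (c + t * d)) (by
        rw [← smul_smul, ← hkey, h3d, smul_smul, inv_mul_cancel₀ h3d0, one_smul])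
  · have hαβ : (t + s) / 2 ≠ (t - s) / 2 := by
      intro h; apply hs0; linear_combination h
    have detα : (A - ((t + s) / 2) • 1).det = 0 := by
      rw [det_sub_smul, ← ht, ← hd]
      linear_combination ((1 : ℂ)/4) * hs
    have detβ : (A - ((t - s) / 2) • 1).det = 0 := by
      rw [det_sub_smul, ← ht, ← hd]
      linear_combination ((1 : ℂ)/4) * hs
    obtain ⟨v, hv, hv2⟩ := (Matrix.exists_mulVec_eq_zero_iff).mpr detα
    obtain ⟨w, hw, hw2⟩ := (Matrix.exists_mulVec_eq_zero_iff).mpr detβ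
    have hvA : A.mulVec v = ((t + s) / 2) • v := by
      have h0 : A.mulVec v - ((t + s) / 2) • v = 0 := by
        rw [← hv2, Matrix.sub_mulVec, Matrix.smul_mulVec, Matrix.one_mulVec]
      linear_combination (norm := module) h0
    have hwA : A.mulVec w = ((t - s) / 2) • w := by
      have h0 : A.mulVec w - ((t - s) / 2) • w = 0 := by
        rw [← hw2, Matrix.sub_mulVec, Matrix.smul_mulVec, Matrix.one_mulVec]
      linear_combination (norm := module) h0
    refine ⟨Projectivization.mk ℂ v hv, Projectivization.mk ℂ w hw, ?_, ?_, ?_⟩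
    · intro hmk
      obtain ⟨r, hr⟩ := (Projectivization.mk_eq_mk_iff' ℂ v w hv hw).mp hmk
      have hr0 : r ≠ 0 := by rintro rfl; rw [zero_smul] at hr; exact hv hr.symm
      have h1 : ((t + s) / 2) • v = ((t - s) / 2) • v := by
        rw [← hvA, ← hr, Matrix.mulVec_smul, hwA, smul_comm]
      have h2 : ((t + s) / 2 - (t - s) / 2) • v = 0 := by
        rw [sub_smul, h1, sub_self]
      rcases smul_eq_zero.mp h2 with h | h
      · exact hαβ (by linear_combination h)
      · exact hv h
    · exact (smul_mk_self_iff g hv).mpr ⟨(t + s) / 2, by rw [← hAdef]; exact hvA⟩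
    · exact (smul_mk_self_iff g hw).mpr ⟨(t - s) / 2, by rw [← hAdef]; exact hwA⟩
lemma commute_of_two_common_fixed {e f : PGL2C} {x y : ProjLine} (hxy : x ≠ y)
    (hex : e • x = x) (hey : e • y = y) (hfx : f • x = x) (hfy : f • y = y) :
    e * f = f * e := by
  obtain ⟨g, rfl⟩ := QuotientGroup.mk'_surjective ScalarSubgroup e
  obtain ⟨h, rfl⟩ := QuotientGroup.mk'_surjective ScalarSubgroup f
  rw [QuotientGroup.mk'_apply] at *
  obtain ⟨v, hv, rfl⟩ : ∃ v hv, Projectivization.mk ℂ v hv = x :=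
    ⟨x.rep, x.rep_nonzero, x.mk_rep⟩
  obtain ⟨w, hw, rfl⟩ : ∃ w hw, Projectivization.mk ℂ w hw = y :=
    ⟨y.rep, y.rep_nonzero, y.mk_rep⟩
  obtain ⟨α, hgv⟩ := (smul_mk_self_iff g hv).mp hex
  obtain ⟨β, hgw⟩ := (smul_mk_self_iff g hw).mp hey
  obtain ⟨γ, hhv⟩ := (smul_mk_self_iff h hv).mp hfx
  obtain ⟨δ, hhw⟩ := (smul_mk_self_iff h hw).mp hfy
  have hli : LinearIndependent ℂ ![v, w] := by
    rw [linearIndependent_fin2]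
    refine ⟨hw, fun r hr => hxy ?_⟩
    rw [Projectivization.mk_eq_mk_iff']
    exact ⟨r, hr⟩
  have hcard : Fintype.card (Fin 2) = Module.finrank ℂ (Fin 2 → ℂ) := by simp
  let B := basisOfLinearIndependentOfCardEqFinrank hli hcard
  have hBv : B 0 = v := by
    rw [show B 0 = ![v, w] 0 from by rw [coe_basisOfLinearIndependentOfCardEqFinrank]]; rfl
  have hBw : B 1 = w := by
    rw [show B 1 = ![v, w] 1 from by rw [coe_basisOfLinearIndependentOfCardEqFinrank]]; rfl
  have hcomm : (g : M2) * (h : M2) = (h : M2) * (g : M2) := by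
    apply mulVecLin_inj
    apply B.ext
    intro i
    fin_cases i
    · show (((g : M2) * (h : M2)).mulVecLin) (B 0) = (((h : M2) * (g : M2)).mulVecLin) (B 0)
      rw [hBv, Matrix.mulVecLin_apply, Matrix.mulVecLin_apply, ← Matrix.mulVec_mulVec,
        ← Matrix.mulVec_mulVec, hhv, hgv, Matrix.mulVec_smul, Matrix.mulVec_smul, hgv, hhv,
        smul_smul, smul_smul, mul_comm]
    · show (((g : M2) * (h : M2)).mulVecLin) (B 1) = (((h : M2) * (g : M2)).mulVecLin) (B 1)
      rw [hBw, Matrix.mulVecLin_apply, Matrix.mulVecLin_apply, ← Matrix.mulVec_mulVec,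
        ← Matrix.mulVec_mulVec, hhw, hgw, Matrix.mulVec_smul, Matrix.mulVec_smul, hgw, hhw,
        smul_smul, smul_smul, mul_comm]
  have hgh : g * h = h * g := Units.ext (by
    rw [Units.val_mul, Units.val_mul]; exact hcomm)
  show (QuotientGroup.mk g * QuotientGroup.mk h : PGL2C) = QuotientGroup.mk h * QuotientGroup.mk g
  rw [← QuotientGroup.mk_mul, ← QuotientGroup.mk_mul, hgh]

def s3σ : Equiv.Perm (Fin 3) := finRotate 3
def s3τ : Equiv.Perm (Fin 3) := Equiv.swap 0 1

/-- Let `φ : S₃ → PGL₂(ℂ)` be an injective group homomorphism, so that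
`S₃` acts faithfully on the complex projective line `ℙ¹` through `φ`.  Then the action
has exactly three orbits consisting of points with nontrivial stabilizer, namely two
orbits of cardinality 3 and one orbit of cardinality 2; every other orbit has
cardinality 6 (is free). -/
theorem faithful_S3_action_on_P1_orbit_structure
    (φ : Equiv.Perm (Fin 3) →* PGL2C) (hφ : Function.Injective φ) :
    ∃ O₁ O₂ O₃ : Set ProjLine,
      (∃ x, O₁ = orbitThrough φ x) ∧ (∃ x, O₂ = orbitThrough φ x) ∧
      (∃ x, O₃ = orbitThrough φ x) ∧
      O₁ ≠ O₂ ∧ O₁ ≠ O₃ ∧ O₂ ≠ O₃ ∧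
      O₁.ncard = 3 ∧ O₂.ncard = 3 ∧ O₃.ncard = 2 ∧
      {x : ProjLine | stabilizerThrough φ x ≠ ⊥} = O₁ ∪ O₂ ∪ O₃ ∧
      (∀ x : ProjLine, x ∉ O₁ ∪ O₂ ∪ O₃ → (orbitThrough φ x).ncard = 6) := by
  classical
  have d1 : s3σ ≠ 1 := by decide
  have d2 : s3σ * s3σ ≠ 1 := by decide
  have d3 : s3σ ^ 3 = 1 := by decide
  have d4 : s3τ ≠ 1 := by decide
  have d5 : s3τ ^ 2 = 1 := by decide
  have d6 : s3σ * s3τ ≠ s3τ * s3σ := by decide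
  have d7 : ∀ g : Equiv.Perm (Fin 3), g = 1 ∨ g = s3σ ∨ g = s3σ * s3σ ∨ g = s3τ ∨
      g = s3σ * s3τ ∨ g = s3σ * s3σ * s3τ := by decide
  have d8 : s3σ * s3τ = (s3σ * s3σ) * s3τ * (s3σ * s3σ)⁻¹ := by decide
  have d9 : s3σ * s3σ * s3τ = s3σ * s3τ * s3σ⁻¹ := by decide
  have d10 : s3σ * s3τ = s3τ * (s3σ * s3σ) := by decide
  have d11 : s3σ * s3τ * s3σ⁻¹ ≠ 1 := by decide
  have d12 : (s3σ * s3σ) * s3τ * (s3σ * s3σ)⁻¹ ≠ 1 := by decide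
  have d13 : s3τ * (s3σ * s3τ * s3σ⁻¹) = s3σ := by decide
  have d14 : s3τ * ((s3σ * s3σ) * s3τ * (s3σ * s3σ)⁻¹) = s3σ * s3σ := by decide
  have d15 : s3τ * s3τ = 1 := by decide
  have hmulsmul : ∀ (g h : Equiv.Perm (Fin 3)) (z : ProjLine),
      φ (g * h) • z = φ g • (φ h • z) := by
    intro g h z; rw [_root_.map_mul, mul_smul]
  have hφ1 : ∀ g : Equiv.Perm (Fin 3), g ≠ 1 → φ g ≠ 1 := by
    intro g hg h
    exact hg (hφ (by rw [h, _root_.map_one]))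
  have hE3 : (φ s3σ) ^ 3 = 1 := by rw [← _root_.map_pow, d3, _root_.map_one]
  have hF2 : (φ s3τ) ^ 2 = 1 := by rw [← _root_.map_pow, d5, _root_.map_one]
  obtain ⟨p, q, hpq, hEp, hEq⟩ := exists_two_fixed (hφ1 _ d1) (Or.inr rfl) hE3
  have hponly : ∀ z, φ s3σ • z = z → z = p ∨ z = q := by
    intro z hz
    by_contra hcon
    push_neg at hcon
    exact (hφ1 _ d1)
      (eq_one_of_three_fixed hpq (Ne.symm hcon.1) (Ne.symm hcon.2) hEp hEq hz)
  have hsqp : φ (s3σ * s3σ) • p = p := by rw [hmulsmul, hEp, hEp]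
  have hsqq : φ (s3σ * s3σ) • q = q := by rw [hmulsmul, hEq, hEq]
  have hsq_only : ∀ z, φ (s3σ * s3σ) • z = z → z = p ∨ z = q := by
    intro z hz
    by_contra hcon
    push_neg at hcon
    exact (hφ1 _ d2)
      (eq_one_of_three_fixed hpq (Ne.symm hcon.1) (Ne.symm hcon.2) hsqp hsqq hz)
  have hFF : ∀ z : ProjLine, φ s3τ • (φ s3τ • z) = z := by
    intro z
    rw [← hmulsmul, d15, _root_.map_one, one_smul]
  have hFp_mem : φ s3τ • p = p ∨ φ s3τ • p = q := by
    apply hponly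
    calc φ s3σ • (φ s3τ • p) = φ (s3σ * s3τ) • p := (hmulsmul _ _ _).symm
      _ = φ (s3τ * (s3σ * s3σ)) • p := by rw [d10]
      _ = φ s3τ • (φ (s3σ * s3σ) • p) := hmulsmul _ _ _
      _ = φ s3τ • p := by rw [hsqp]
  have hFq_mem : φ s3τ • q = p ∨ φ s3τ • q = q := by
    apply hponly
    calc φ s3σ • (φ s3τ • q) = φ (s3σ * s3τ) • q := (hmulsmul _ _ _).symm
      _ = φ (s3τ * (s3σ * s3σ)) • q := by rw [d10]
      _ = φ s3τ • (φ (s3σ * s3σ) • q) := hmulsmul _ _ _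
      _ = φ s3τ • q := by rw [hsqq]
  have hFp : φ s3τ • p = q := by
    rcases hFp_mem with h | h
    · exfalso
      have hFq : φ s3τ • q = q := by
        rcases hFq_mem with h2 | h2
        · exfalso
          have : q = p := by
            calc q = φ s3τ • (φ s3τ • q) := (hFF q).symm
              _ = φ s3τ • p := by rw [h2]
              _ = p := h
          exact hpq this.symm
        · exact h2
      have hcomm := commute_of_two_common_fixed hpq hEp hEq h hFq
      rw [← _root_.map_mul, ← _root_.map_mul] at hcomm
      exact d6 (hφ hcomm)
    · exact h
  have hFq : φ s3τ • q = p := by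
    rw [← hFp, hFF]
  obtain ⟨a, b, hab, hFa, hFb⟩ := exists_two_fixed (hφ1 _ d4) (Or.inl rfl) hF2
  have hab_only : ∀ z, φ s3τ • z = z → z = a ∨ z = b := by
    intro z hz
    by_contra hcon
    push_neg at hcon
    exact (hφ1 _ d4)
      (eq_one_of_three_fixed hab (Ne.symm hcon.1) (Ne.symm hcon.2) hFa hFb hz)
  have hFnotpq : ∀ z, φ s3τ • z = z → z ≠ p ∧ z ≠ q := by
    intro z hz
    constructor
    · intro h
      rw [h] at hz
      exact hpq ((hFp.symm.trans hz).symm)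
    · intro h
      rw [h] at hz
      exact hpq (hFq.symm.trans hz)
  have hEa_ne : φ s3σ • a ≠ a := by
    intro h
    rcases hponly a h with h' | h'
    · exact (hFnotpq a hFa).1 h'
    · exact (hFnotpq a hFa).2 h'
  have hE2a_ne : φ (s3σ * s3σ) • a ≠ a := by
    intro h
    rcases hsq_only a h with h' | h'
    · exact (hFnotpq a hFa).1 h'
    · exact (hFnotpq a hFa).2 h'
  have hEa_E2a : φ s3σ • a ≠ φ (s3σ * s3σ) • a := by
    intro h
    rw [hmulsmul] at h
    exact hEa_ne ((smul_left_cancel_iff (φ s3σ)).mp h).symm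
  have hEb_ne : φ s3σ • b ≠ b := by
    intro h
    rcases hponly b h with h' | h'
    · exact (hFnotpq b hFb).1 h'
    · exact (hFnotpq b hFb).2 h'
  have hE2b_ne : φ (s3σ * s3σ) • b ≠ b := by
    intro h
    rcases hsq_only b h with h' | h'
    · exact (hFnotpq b hFb).1 h'
    · exact (hFnotpq b hFb).2 h'
  have hEb_E2b : φ s3σ • b ≠ φ (s3σ * s3σ) • b := by
    intro h
    rw [hmulsmul] at h
    exact hEb_ne ((smul_left_cancel_iff (φ s3σ)).mp h).symm
  have hfixEa : φ (s3σ * s3τ * s3σ⁻¹) • (φ s3σ • a) = φ s3σ • a := by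
    rw [← hmulsmul, show s3σ * s3τ * s3σ⁻¹ * s3σ = s3σ * s3τ by group, hmulsmul, hFa]
  have hfixEb : φ (s3σ * s3τ * s3σ⁻¹) • (φ s3σ • b) = φ s3σ • b := by
    rw [← hmulsmul, show s3σ * s3τ * s3σ⁻¹ * s3σ = s3σ * s3τ by group, hmulsmul, hFb]
  have hfixE2a : φ ((s3σ * s3σ) * s3τ * (s3σ * s3σ)⁻¹) • (φ (s3σ * s3σ) • a)
      = φ (s3σ * s3σ) • a := by
    rw [← hmulsmul, show (s3σ * s3σ) * s3τ * (s3σ * s3σ)⁻¹ * (s3σ * s3σ) = (s3σ * s3σ) * s3τ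
      by group, hmulsmul, hFa]
  have hfixE2b : φ ((s3σ * s3σ) * s3τ * (s3σ * s3σ)⁻¹) • (φ (s3σ * s3σ) • b)
      = φ (s3σ * s3σ) • b := by
    rw [← hmulsmul, show (s3σ * s3σ) * s3τ * (s3σ * s3σ)⁻¹ * (s3σ * s3σ) = (s3σ * s3σ) * s3τ
      by group, hmulsmul, hFb]
  have hbEa : b ≠ φ s3σ • a := by
    intro h
    have h1 : φ (s3σ * s3τ * s3σ⁻¹) • b = b := by rw [h]; exact hfixEa
    have h2 : φ s3σ • b = b := by
      rw [← d13, hmulsmul, h1]; exact hFb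
    rcases hponly b h2 with h' | h'
    · exact (hFnotpq b hFb).1 h'
    · exact (hFnotpq b hFb).2 h'
  have hbE2a : b ≠ φ (s3σ * s3σ) • a := by
    intro h
    have h1 : φ ((s3σ * s3σ) * s3τ * (s3σ * s3σ)⁻¹) • b = b := by rw [h]; exact hfixE2a
    have h2 : φ (s3σ * s3σ) • b = b := by
      rw [← d14, hmulsmul, h1]; exact hFb
    rcases hsq_only b h2 with h' | h'
    · exact (hFnotpq b hFb).1 h'
    · exact (hFnotpq b hFb).2 h'
  -- orbit computations
  have horba : ∀ x : ProjLine, φ s3τ • x = x →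
      orbitThrough φ x = {x, φ s3σ • x, φ (s3σ * s3σ) • x} := by
    intro x hx
    ext z
    simp only [Set.mem_insert_iff, Set.mem_singleton_iff]
    constructor
    · rintro ⟨g, rfl⟩
      show φ g • x = x ∨ φ g • x = φ s3σ • x ∨ φ g • x = φ (s3σ * s3σ) • x
      rcases d7 g with rfl | rfl | rfl | rfl | rfl | rfl
      · left; rw [_root_.map_one, one_smul]
      · right; left; rfl
      · right; right; rfl
      · left; exact hx
      · right; left; rw [hmulsmul s3σ s3τ, hx]
      · right; right; rw [hmulsmul (s3σ * s3σ) s3τ, hx]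
    · rintro (rfl | rfl | rfl)
      · exact ⟨1, by simp⟩
      · exact ⟨s3σ, rfl⟩
      · exact ⟨s3σ * s3σ, rfl⟩
  have horbp : orbitThrough φ p = {p, q} := by
    ext z
    simp only [Set.mem_insert_iff, Set.mem_singleton_iff]
    constructor
    · rintro ⟨g, rfl⟩
      show φ g • p = p ∨ φ g • p = q
      rcases d7 g with rfl | rfl | rfl | rfl | rfl | rfl
      · left; rw [_root_.map_one, one_smul]
      · left; exact hEp
      · left; exact hsqp
      · right; exact hFp
      · right; rw [hmulsmul s3σ s3τ, hFp]; exact hEq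
      · right; rw [hmulsmul (s3σ * s3σ) s3τ, hFp]; exact hsqq
    · rintro (rfl | rfl)
      · exact ⟨1, by simp⟩
      · exact ⟨s3τ, hFp⟩
  -- the stabilizer set
  have hS : {x : ProjLine | stabilizerThrough φ x ≠ ⊥}
      = ({a, φ s3σ • a, φ (s3σ * s3σ) • a} ∪ {b, φ s3σ • b, φ (s3σ * s3σ) • b} ∪ {p, q}
        : Set ProjLine) := by
    ext x
    simp only [Set.mem_setOf_eq, Set.mem_union, Set.mem_insert_iff, Set.mem_singleton_iff]
    constructor
    · intro hx
      have hex : ∃ g, g ∈ stabilizerThrough φ x ∧ g ≠ 1 := by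
        by_contra hcon
        push_neg at hcon
        exact hx ((Subgroup.eq_bot_iff_forall _).mpr hcon)
      obtain ⟨g, hgmem, hg1⟩ := hex
      have hgx : φ g • x = x := MulAction.mem_stabilizer_iff.mp (Subgroup.mem_comap.mp hgmem)
      rcases d7 g with rfl | rfl | rfl | rfl | rfl | rfl
      · exact absurd rfl hg1
      · rcases hponly x hgx with rfl | rfl
        · right; left; rfl
        · right; right; rfl
      · rcases hsq_only x hgx with rfl | rfl
        · right; left; rfl
        · right; right; rfl
      · rcases hab_only x hgx with rfl | rfl
        · left; left; left; rfl
        · left; right; left; rfl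
      · rw [d8] at hgx
        have h2 : φ s3τ • (φ ((s3σ * s3σ)⁻¹) • x) = φ ((s3σ * s3σ)⁻¹) • x := by
          have h3 := congrArg (fun z => φ ((s3σ * s3σ)⁻¹) • z) hgx
          rw [← hmulsmul, show (s3σ * s3σ)⁻¹ * ((s3σ * s3σ) * s3τ * (s3σ * s3σ)⁻¹)
            = s3τ * (s3σ * s3σ)⁻¹ by group, hmulsmul] at h3
          exact h3
        rcases hab_only _ h2 with h' | h'
        · left; left; right; right
          rw [← h', ← hmulsmul, mul_inv_cancel, _root_.map_one, one_smul]
        · left; right; right; right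
          rw [← h', ← hmulsmul, mul_inv_cancel, _root_.map_one, one_smul]
      · rw [d9] at hgx
        have h2 : φ s3τ • (φ (s3σ⁻¹) • x) = φ (s3σ⁻¹) • x := by
          have h3 := congrArg (fun z => φ (s3σ⁻¹) • z) hgx
          rw [← hmulsmul, show s3σ⁻¹ * (s3σ * s3τ * s3σ⁻¹) = s3τ * s3σ⁻¹ by group,
            hmulsmul] at h3
          exact h3
        rcases hab_only _ h2 with h' | h'
        · left; left; right; left
          rw [← h', ← hmulsmul, mul_inv_cancel, _root_.map_one, one_smul]
        · left; right; right; left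
          rw [← h', ← hmulsmul, mul_inv_cancel, _root_.map_one, one_smul]
    · intro hx
      have hne : ∀ g : Equiv.Perm (Fin 3), g ≠ 1 → φ g • x = x →
          stabilizerThrough φ x ≠ ⊥ := by
        intro g hg hgx hbot
        exact hg ((Subgroup.eq_bot_iff_forall _).mp hbot g
          (Subgroup.mem_comap.mpr (MulAction.mem_stabilizer_iff.mpr hgx)))
      rcases hx with ((rfl | rfl | rfl) | (rfl | rfl | rfl)) | (rfl | rfl)
      · exact hne s3τ d4 hFa
      · exact hne _ d11 hfixEa
      · exact hne _ d12 hfixE2a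
      · exact hne s3τ d4 hFb
      · exact hne _ d11 hfixEb
      · exact hne _ d12 hfixE2b
      · exact hne s3σ d1 hEp
      · exact hne s3σ d1 hEq
  have hc1 : ({a, φ s3σ • a, φ (s3σ * s3σ) • a} : Set ProjLine).ncard = 3 :=
    Set.ncard_eq_three.mpr ⟨a, φ s3σ • a, φ (s3σ * s3σ) • a,
      Ne.symm hEa_ne, Ne.symm hE2a_ne, hEa_E2a, rfl⟩
  have hc2 : ({b, φ s3σ • b, φ (s3σ * s3σ) • b} : Set ProjLine).ncard = 3 :=
    Set.ncard_eq_three.mpr ⟨b, φ s3σ • b, φ (s3σ * s3σ) • b,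
      Ne.symm hEb_ne, Ne.symm hE2b_ne, hEb_E2b, rfl⟩
  have hc3 : ({p, q} : Set ProjLine).ncard = 2 := Set.ncard_pair hpq
  refine ⟨{a, φ s3σ • a, φ (s3σ * s3σ) • a}, {b, φ s3σ • b, φ (s3σ * s3σ) • b}, {p, q},
    ⟨a, (horba a hFa).symm⟩, ⟨b, (horba b hFb).symm⟩, ⟨p, horbp.symm⟩, ?_, ?_, ?_,
    hc1, hc2, hc3, hS, ?_⟩
  · intro h
    have hbmem : b ∈ ({a, φ s3σ • a, φ (s3σ * s3σ) • a} : Set ProjLine) := by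
      rw [h]; left; rfl
    rcases hbmem with h' | h' | h'
    · exact hab h'.symm
    · exact hbEa h'
    · exact hbE2a h'
  · intro h
    have : (3 : ℕ) = 2 := by rw [← hc1, h, hc3]
    norm_num at this
  · intro h
    have : (3 : ℕ) = 2 := by rw [← hc2, h, hc3]
    norm_num at this
  · intro x hx
    have hstab : stabilizerThrough φ x = ⊥ := by
      by_contra hne
      have hmem : x ∈ {x : ProjLine | stabilizerThrough φ x ≠ ⊥} := hne
      rw [hS] at hmem
      exact hx hmem
    have hinj : Function.Injective (fun g : Equiv.Perm (Fin 3) => φ g • x) := by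
      intro g₁ g₂ h12
      simp only at h12
      have hfix : φ (g₂⁻¹ * g₁) • x = x := by
        rw [hmulsmul, h12, ← hmulsmul, inv_mul_cancel, _root_.map_one, one_smul]
      have hmem : g₂⁻¹ * g₁ ∈ stabilizerThrough φ x :=
        Subgroup.mem_comap.mpr (MulAction.mem_stabilizer_iff.mpr hfix)
      rw [hstab, Subgroup.mem_bot] at hmem
      exact (inv_mul_eq_one.mp hmem).symm
    have himg : orbitThrough φ x = (fun g : Equiv.Perm (Fin 3) => φ g • x) '' Set.univ := by
      rw [Set.image_univ]; rfl
    rw [himg, Set.ncard_image_of_injective _ hinj, Set.ncard_univ, Nat.card_eq_fintype_card]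
    simp only [Fintype.card_perm, Fintype.card_fin]
    rfl

end
end

section
/- Let D₆ denote the dihedral group of order 12 and let φ : D₆ → PGL₂(ℂ) be a group homomorphism whose kernel is exactly the center of D₆. Then for the induced action of D₆ on the complex projective line ℙ¹: (i) the stabilizer of every point of ℙ¹ contains the center of D₆; (ii) there is exactly one orbit of cardinality 2, and the stabilizer of each point of this orbit is a cyclic group of order 6; (iii) the stabilizer of every point lying in an orbit of cardinality 6 has order 2, i.e. equals the center of D₆. -/
open Matrix Projectivization
open scoped LinearAlgebra.Projectivization

set_option synthInstance.maxHeartbeats 1000000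
set_option maxHeartbeats 1000000

noncomputable section

variable {G : Type*} [Group G]

/-! ### Auxiliary lemmas -/

lemma isCyclic_zpowers' {G : Type*} [Group G] (g : G) : IsCyclic (Subgroup.zpowers g) := by
  refine ⟨⟨⟨g, Subgroup.mem_zpowers g⟩, fun x => ?_⟩⟩
  obtain ⟨k, hk⟩ := x.2
  refine Subgroup.mem_zpowers_iff.mpr ⟨k, Subtype.ext ?_⟩
  simpa using hk

lemma cube_root_exists : ∃ ω : ℂ, ω ^ 3 = 1 ∧ ω ≠ 1 :=
  ⟨_, (Complex.isPrimitiveRoot_exp 3 (by norm_num)).pow_eq_one,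
    (Complex.isPrimitiveRoot_exp 3 (by norm_num)).ne_one (by norm_num)⟩

lemma eig_indep (f : (Fin 2 → ℂ) ≃ₗ[ℂ] (Fin 2 → ℂ)) {v z : Fin 2 → ℂ} {lam mu : ℂ}
    (hv0 : v ≠ 0) (hz0 : z ≠ 0) (hne : lam ≠ mu)
    (hfv : f v = lam • v) (hfz : f z = mu • z) : LinearIndependent ℂ ![v, z] := by
  rw [LinearIndependent.pair_iff]
  intro s t hst
  have h2 : (s * lam) • v + (t * mu) • z = 0 := by
    have := congrArg f hst
    rw [_root_.map_add, _root_.map_smul, _root_.map_smul, hfv, hfz, _root_.map_zero, smul_smul, smul_smul] at this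
    exact this
  have h6 : (s * lam) • v + (t * lam) • z = 0 := by
    have := congrArg (fun x => lam • x) hst
    simpa [smul_add, smul_smul, mul_comm, smul_zero] using this
  have h7 : (t * mu - t * lam) • z = 0 := by
    have := sub_eq_zero.mpr (h2.trans h6.symm)
    rwa [add_sub_add_left_eq_sub, ← sub_smul] at this
  have ht : t = 0 := by
    rcases smul_eq_zero.mp h7 with h | h
    · rcases mul_eq_zero.mp (show t * (mu - lam) = 0 by linear_combination h) with h | h
      · exact h
      · exact absurd (by linear_combination h) hne.symm
    · exact absurd h hz0
  have hs : s = 0 := by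
    rw [ht, zero_smul, add_zero, smul_eq_zero] at hst
    exact hst.resolve_right hv0
  exact ⟨hs, ht⟩

lemma eigen_data (f : (Fin 2 → ℂ) ≃ₗ[ℂ] (Fin 2 → ℂ)) (c : ℂ) (hc : c ≠ 0)
    (h3 : ∀ u, f (f (f u)) = c • u)
    (hns : ¬ ∃ d : ℂ, ∀ u, f u = d • u) :
    ∃ (v z : Fin 2 → ℂ) (lam mu : ℂ), v ≠ 0 ∧ z ≠ 0 ∧ lam ≠ 0 ∧ mu ≠ 0 ∧ lam ≠ mu ∧
      f v = lam • v ∧ f z = mu • z ∧ LinearIndependent ℂ ![v, z] := by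
  obtain ⟨lam, hlam⟩ := Module.End.exists_eigenvalue (f.toLinearMap : Module.End ℂ (Fin 2 → ℂ))
  obtain ⟨v, hv⟩ := hlam.exists_hasEigenvector
  have hv0 : v ≠ 0 := hv.right
  have hfv : f v = lam • v := hv.apply_eq_smul
  have hlam3 : lam ^ 3 = c := by
    have h := h3 v
    simp only [hfv, _root_.map_smul, smul_smul] at h
    have h' : (lam * lam * lam - c) • v = 0 := by rw [sub_smul, h, sub_self]
    rcases smul_eq_zero.mp h' with h'' | h''
    · linear_combination h''
    · exact absurd h'' hv0
  have hlam0 : lam ≠ 0 := fun h => hc (by rw [← hlam3, h]; ring)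
  obtain ⟨u, hu⟩ : ∃ u, f u ≠ lam • u := by
    by_contra h
    push_neg at h
    exact hns ⟨lam, h⟩
  set w : Fin 2 → ℂ := f u - lam • u with hw_def
  have hw0 : w ≠ 0 := sub_ne_zero.mpr hu
  have h1 : f w = f (f u) - lam • f u := by rw [hw_def, _root_.map_sub, _root_.map_smul]
  have h2 : f (f w) = c • u - lam • f (f u) := by rw [h1, _root_.map_sub, _root_.map_smul, h3]
  have hkey : f (f w) + lam • f w + (lam ^ 2) • w = 0 := by
    rw [h2, h1, hw_def, ← hlam3]
    module
  obtain ⟨ω, hω3, hω1⟩ := cube_root_exists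
  have hωsum : ω ^ 2 + ω + 1 = 0 := by
    have h := mul_eq_zero.mp (show (ω - 1) * (ω ^ 2 + ω + 1) = 0 by linear_combination hω3)
    rcases h with h | h
    · exact absurd (sub_eq_zero.mp h) hω1
    · exact h
  have hω0 : ω ≠ 0 := fun h => by simp [h] at hω3
  have hω2 : ω ^ 2 ≠ 1 := by
    intro h
    have h4 : ω * ω ^ 2 = ω ^ 3 := by ring
    rw [h, hω3, mul_one] at h4
    exact hω1 h4
  have hkey2 : f (f w) = -(lam • f w) - (lam ^ 2) • w := by
    linear_combination (norm := module) hkey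
  by_cases hw' : f w - (ω ^ 2 * lam) • w = 0
  · have hfw : f w = (ω ^ 2 * lam) • w := sub_eq_zero.mp hw'
    have hne : lam ≠ ω ^ 2 * lam := by
      intro h
      have h' : (ω ^ 2 - 1) * lam = 0 := by linear_combination -h
      rcases mul_eq_zero.mp h' with h'' | h''
      · exact hω2 (by linear_combination h'')
      · exact hlam0 h''
    exact ⟨v, w, lam, ω ^ 2 * lam, hv0, hw0, hlam0,
      mul_ne_zero (pow_ne_zero 2 hω0) hlam0, hne, hfv, hfw,
      eig_indep f hv0 hw0 hne hfv hfw⟩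
  · set w' : Fin 2 → ℂ := f w - (ω ^ 2 * lam) • w with hw'_def
    have hfw' : f w' = (ω * lam) • w' := by
      rw [hw'_def, _root_.map_sub, _root_.map_smul, hkey2]
      match_scalars
      · linear_combination (-(lam : ℂ)) * hωsum
      · linear_combination (lam ^ 2) * hω3
      · linear_combination (-(lam ^ 3)) * hω3
    have hne : lam ≠ ω * lam := by
      intro h
      have h' : (1 - ω) * lam = 0 := by linear_combination h
      rcases mul_eq_zero.mp h' with h'' | h''
      · exact hω1 (by linear_combination -h'')
      · exact hlam0 h''
    exact ⟨v, w', lam, ω * lam, hv0, hw', hlam0, mul_ne_zero hω0 hlam0, hne, hfv, hfw',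
      eig_indep f hv0 hw' hne hfv hfw'⟩

lemma pgl_mk_smul (A : GL (Fin 2) ℂ) (x : ProjLine) :
    (QuotientGroup.mk A : PGL2C) • x = A • x := rfl

lemma gl_apply (g : GL (Fin 2) ℂ) (v : Fin 2 → ℂ) :
    glToLinEquiv g v = Matrix.mulVecLin (g : Matrix (Fin 2) (Fin 2) ℂ) v := rfl

lemma gl_scalar_apply (c : ℂˣ) (v : Fin 2 → ℂ) :
    glToLinEquiv (Units.map (algebraMap ℂ (Matrix (Fin 2) (Fin 2) ℂ)).toMonoidHom c) v
      = (c : ℂ) • v := by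
  rw [gl_apply]
  simp [Matrix.mulVecLin_apply, Matrix.algebraMap_eq_diagonal,
    Matrix.mulVec_diagonal, funext_iff, Pi.smul_apply, smul_eq_mul]

lemma gl_smul_mk (g : GL (Fin 2) ℂ) (v : Fin 2 → ℂ) (hv : v ≠ 0) :
    g • Projectivization.mk ℂ v hv
      = Projectivization.mk ℂ (glToLinEquiv g v)
          (fun h => hv ((glToLinEquiv g).map_eq_zero_iff.mp h)) := by
  rw [gl_smul_def, Projectivization.map_mk]
  rfl

/-- The key geometric lemma: `φ (r 1)` fixes exactly two points `p ≠ q` of `ℙ¹`,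
and `φ (sr 0)` swaps them. -/
lemma key_lemma (φ : DihedralGroup 6 →* PGL2C)
    (hker : φ.ker = Subgroup.center (DihedralGroup 6)) :
    ∃ p q : ProjLine, p ≠ q ∧
      (∀ x : ProjLine, φ (.r 1) • x = x ↔ (x = p ∨ x = q)) ∧
      φ (.sr 0) • p = q ∧ φ (.sr 0) • q = p := by
  have hr3ker : (DihedralGroup.r 3 : DihedralGroup 6) ∈ φ.ker := by
    rw [hker]
    exact Subgroup.mem_center_iff.mpr (by decide)
  have hr1ker : (DihedralGroup.r 1 : DihedralGroup 6) ∉ φ.ker := by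
    rw [hker]
    exact fun h => absurd (Subgroup.mem_center_iff.mp h) (by decide)
  set a : PGL2C := φ (.r 1) with ha_def
  set b : PGL2C := φ (.sr 0) with hb_def
  have ha3 : a ^ 3 = 1 := by
    rw [ha_def, ← _root_.map_pow]
    have h : (DihedralGroup.r 1 : DihedralGroup 6) ^ 3 = .r 3 := by decide
    rw [h]
    exact hr3ker
  have ha1 : a ≠ 1 := fun h => hr1ker h
  obtain ⟨A, hA⟩ := QuotientGroup.mk_surjective a
  have hA3 : A ^ 3 ∈ ScalarSubgroup := by
    rw [← QuotientGroup.eq_one_iff]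
    have h : (QuotientGroup.mk (A ^ 3) : PGL2C) = (QuotientGroup.mk A : PGL2C) ^ 3 := rfl
    rw [h, hA, ha3]
  have hAs : A ∉ ScalarSubgroup := by
    intro h
    exact ha1 (by rw [← hA, QuotientGroup.eq_one_iff]; exact h)
  obtain ⟨cu, hcu⟩ := hA3
  set f := glToLinEquiv A with hf_def
  have h3 : ∀ u, f (f (f u)) = (cu : ℂ) • u := by
    intro u
    have h : f (f (f u)) = glToLinEquiv (A ^ 3) u := by
      rw [pow_succ, pow_succ, pow_one, _root_.map_mul, _root_.map_mul]
      rfl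
    rw [h, ← hcu, gl_scalar_apply]
  have hns : ¬ ∃ d : ℂ, ∀ u, f u = d • u := by
    rintro ⟨d, hd⟩
    have hd0 : d ≠ 0 := by
      intro h
      have h2 := hd (Pi.single 0 1)
      rw [h, zero_smul] at h2
      have h3' := f.map_eq_zero_iff.mp h2
      have h4 := congrFun h3' 0
      simp at h4
    apply hAs
    refine ⟨Units.mk0 d hd0, ?_⟩
    apply glToLinEquiv.injective
    apply LinearEquiv.toLinearMap_injective
    apply LinearMap.ext
    intro u
    show glToLinEquiv _ u = f u
    rw [gl_scalar_apply, hd]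
    rfl
  obtain ⟨v, z, lam, mu, hv0, hz0, hlam0, hmu0, hlmu, hfv, hfz, hli⟩ :=
    eigen_data f (cu : ℂ) (Units.ne_zero cu) h3 hns
  set p : ProjLine := Projectivization.mk ℂ v hv0 with hp_def
  set q : ProjLine := Projectivization.mk ℂ z hz0 with hq_def
  have hpq : p ≠ q := by
    rw [hp_def, hq_def, Ne, Projectivization.mk_eq_mk_iff']
    rintro ⟨t, ht⟩
    have h1 : f (t • z) = (t * mu) • z := by rw [_root_.map_smul, hfz, smul_smul]
    have h2 : f (t • z) = (lam * t) • z := by rw [ht, hfv, ← ht, smul_smul]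
    have h4 : (t * mu - lam * t) • z = 0 := by rw [sub_smul, ← h1, ← h2, sub_self]
    rcases smul_eq_zero.mp h4 with h | h
    · have ht0 : t ≠ 0 := by
        intro h0
        rw [h0, zero_smul] at ht
        exact hv0 ht.symm
      rcases mul_eq_zero.mp (show t * (mu - lam) = 0 by linear_combination h) with h' | h'
      · exact ht0 h'
      · exact hlmu (by linear_combination -h')
    · exact hz0 h
  have hcard : Fintype.card (Fin 2) = Module.finrank ℂ (Fin 2 → ℂ) := by simp
  set B := basisOfLinearIndependentOfCardEqFinrank hli hcard with hB_def
  have hBcoe : ∀ i, B i = ![v, z] i := fun i => by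
    rw [hB_def, coe_basisOfLinearIndependentOfCardEqFinrank]
  have hrep : ∀ u : Fin 2 → ℂ, u = B.repr u 0 • v + B.repr u 1 • z := by
    intro u
    conv_lhs => rw [← B.sum_repr u]
    rw [Fin.sum_univ_two, hBcoe 0, hBcoe 1]
    rfl
  have hap : a • p = p := by
    rw [← hA, hp_def, pgl_mk_smul, gl_smul_mk, Projectivization.mk_eq_mk_iff']
    exact ⟨lam, hfv.symm⟩
  have haq : a • q = q := by
    rw [← hA, hq_def, pgl_mk_smul, gl_smul_mk, Projectivization.mk_eq_mk_iff']
    exact ⟨mu, hfz.symm⟩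
  have hfix : ∀ x : ProjLine, a • x = x ↔ (x = p ∨ x = q) := by
    intro x
    constructor
    · induction x using Projectivization.ind with
      | h u hu =>
        intro h
        rw [← hA, pgl_mk_smul, gl_smul_mk, Projectivization.mk_eq_mk_iff'] at h
        obtain ⟨t, ht⟩ := h
        set α := B.repr u 0 with hα
        set β := B.repr u 1 with hβ
        have hu_eq : u = α • v + β • z := hrep u
        have hfu : f u = (α * lam) • v + (β * mu) • z := by
          conv_lhs => rw [hu_eq]
          rw [_root_.map_add, _root_.map_smul, _root_.map_smul, hfv, hfz, smul_smul, smul_smul]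
        have htu : (t * α) • v + (t * β) • z = f u := by
          conv_rhs => rw [← ht]
          conv_rhs => rw [hu_eq]
          rw [smul_add, smul_smul, smul_smul]
        have heq : (α * lam) • v + (β * mu) • z = (t * α) • v + (t * β) • z :=
          hfu.symm.trans htu.symm
        have hco : (α * lam - t * α) • v + (β * mu - t * β) • z = 0 := by
          linear_combination (norm := module) heq
        obtain ⟨hc1, hc2⟩ := LinearIndependent.pair_iff.mp hli _ _ hco
        by_cases hα0 : α = 0
        · right
          rw [hq_def, Projectivization.mk_eq_mk_iff']
          exact ⟨β, by rw [hu_eq, hα0, zero_smul, zero_add]⟩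
        · left
          have htlam : t = lam := by
            rcases mul_eq_zero.mp (show α * (lam - t) = 0 by linear_combination hc1) with h | h
            · exact absurd h hα0
            · linear_combination -h
          have hβ0 : β = 0 := by
            rcases mul_eq_zero.mp (show β * (mu - t) = 0 by linear_combination hc2) with h | h
            · exact h
            · exact absurd (by linear_combination -h - htlam : lam = mu) hlmu
          rw [hp_def, Projectivization.mk_eq_mk_iff']
          exact ⟨α, by rw [hu_eq, hβ0, zero_smul, add_zero]⟩
    · rintro (rfl | rfl)
      · exact hap
      · exact haq
  -- the swap
  have hb2 : b * b = 1 := by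
    rw [hb_def, ← _root_.map_mul]
    have h : (DihedralGroup.sr 0 : DihedralGroup 6) * .sr 0 = 1 := by decide
    rw [h, _root_.map_one]
  have hab : a * b = b * a⁻¹ := by
    rw [ha_def, hb_def, ← _root_.map_mul, ← _root_.map_inv, ← _root_.map_mul]
    congr 1
  have hbfix : ∀ x : ProjLine, a • x = x → a • (b • x) = b • x := by
    intro x hx
    rw [← mul_smul, hab, mul_smul]
    congr 1
    have h' := congrArg (fun y => a⁻¹ • y) hx
    simpa using h'.symm
  have hbp_mem : b • p = p ∨ b • p = q := (hfix _).mp (hbfix p hap)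
  have hbq_mem : b • q = p ∨ b • q = q := (hfix _).mp (hbfix q haq)
  rcases hbp_mem with hbp | hbp
  · exfalso
    have hbq : b • q = q := by
      rcases hbq_mem with h | h
      · exfalso
        have h2 : b • (b • q) = b • p := by rw [h]
        rw [← mul_smul, hb2, one_smul] at h2
        exact hpq ((h2.trans hbp).symm)
      · exact h
    obtain ⟨Bm, hBm⟩ := QuotientGroup.mk_surjective b
    set g := glToLinEquiv Bm with hg_def
    have hgv : ∃ s : ℂ, s • v = g v := by
      rw [← hBm, hp_def, pgl_mk_smul, gl_smul_mk, Projectivization.mk_eq_mk_iff'] at hbp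
      exact hbp
    have hgz : ∃ t : ℂ, t • z = g z := by
      rw [← hBm, hq_def, pgl_mk_smul, gl_smul_mk, Projectivization.mk_eq_mk_iff'] at hbq
      exact hbq
    obtain ⟨s, hs⟩ := hgv
    obtain ⟨t, ht⟩ := hgz
    have hcomm_fun : ∀ u, f (g u) = g (f u) := by
      intro u
      conv_lhs => rw [hrep u]
      conv_rhs => rw [hrep u]
      simp only [_root_.map_add, _root_.map_smul, ← hs, ← ht, hfv, hfz, smul_smul]
      module
    have hglab : glToLinEquiv (A * Bm) = glToLinEquiv (Bm * A) := by
      rw [_root_.map_mul, _root_.map_mul]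
      exact LinearEquiv.toLinearMap_injective (LinearMap.ext fun u =>
        (hcomm_fun u : (f * g) u = (g * f) u))
    have hABcomm : A * Bm = Bm * A := glToLinEquiv.injective hglab
    have hab_comm : a * b = b * a := by
      rw [← hA, ← hBm]
      show (QuotientGroup.mk (A * Bm) : PGL2C) = QuotientGroup.mk (Bm * A)
      rw [hABcomm]
    have hφcomm : φ (.r 1 * .sr 0) = φ (.sr 0 * .r 1) := by
      rw [_root_.map_mul, _root_.map_mul, ← ha_def, ← hb_def, hab_comm]
    have hk : (DihedralGroup.r 1 * .sr 0 : DihedralGroup 6) * (.sr 0 * .r 1)⁻¹ ∈ φ.ker := by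
      rw [MonoidHom.mem_ker, _root_.map_mul, _root_.map_inv, hφcomm, mul_inv_cancel]
    rw [hker] at hk
    exact absurd (Subgroup.mem_center_iff.mp hk) (by decide)
  · have hbq : b • q = p := by
      rcases hbq_mem with h | h
      · exact h
      · exfalso
        exact hpq (MulAction.injective b (hbp.trans h.symm))
    exact ⟨p, q, hpq, hfix, hbp, hbq⟩

/-- Let `D₆` be the dihedral group of order 12 and `φ : D₆ → PGL₂(ℂ)` a
group homomorphism whose kernel is exactly the center of `D₆`.  Then for the induced
action of `D₆` on the complex projective line `ℙ¹`:
(i) the stabilizer of every point contains the center of `D₆`;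
(ii) there is exactly one orbit of cardinality 2, and the stabilizer of each point of
this orbit is a cyclic group of order 6;
(iii) the stabilizer of every point lying in an orbit of cardinality 6 has order 2,
i.e. equals the center of `D₆`. -/
theorem dihedral_six_action_on_P1_orbit_structure
    (φ : DihedralGroup 6 →* PGL2C)
    (hker : φ.ker = Subgroup.center (DihedralGroup 6)) :
    (∀ x : ProjLine, Subgroup.center (DihedralGroup 6) ≤ stabilizerThrough φ x) ∧
    (∃! O : Set ProjLine, (∃ x, O = orbitThrough φ x) ∧ O.ncard = 2) ∧
    (∀ x : ProjLine, (orbitThrough φ x).ncard = 2 →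
      IsCyclic (stabilizerThrough φ x) ∧ Nat.card (stabilizerThrough φ x) = 6) ∧
    (∀ x : ProjLine, (orbitThrough φ x).ncard = 6 →
      Nat.card (stabilizerThrough φ x) = 2 ∧
        stabilizerThrough φ x = Subgroup.center (DihedralGroup 6)) := by

  obtain ⟨p, q, hpq, hfix, hbp, hbq⟩ := key_lemma φ hker
  have hφr3 : φ (.r 3) = 1 := by
    have h : (DihedralGroup.r 3 : DihedralGroup 6) ∈ φ.ker := by
      rw [hker]; exact Subgroup.mem_center_iff.mpr (by decide)
    exact h
  -- the center is the cyclic group generated by `r 3`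
  have hcenter_eq : Subgroup.center (DihedralGroup 6) = Subgroup.zpowers (DihedralGroup.r 3) := by
    have key3 : ∀ j : ZMod 6,
        DihedralGroup.sr 0 * DihedralGroup.r j = DihedralGroup.r j * DihedralGroup.sr 0 →
          j = 0 ∨ j = 3 := by decide
    have key4 : ∀ j : ZMod 6,
        DihedralGroup.r 1 * DihedralGroup.sr j = DihedralGroup.sr j * DihedralGroup.r 1 →
          False := by decide
    apply le_antisymm
    · intro g hg
      have h := Subgroup.mem_center_iff.mp hg
      cases g with
      | r i =>
        rcases key3 i (h (.sr 0)) with rfl | rfl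
        · rw [← DihedralGroup.one_def]; exact Subgroup.one_mem _
        · exact Subgroup.mem_zpowers _
      | sr i => exact absurd (h (.r 1)) (fun hh => key4 i hh)
    · exact Subgroup.zpowers_le.mpr (Subgroup.mem_center_iff.mpr (by decide))
  have hcard_center : Nat.card (Subgroup.center (DihedralGroup 6)) = 2 := by
    rw [hcenter_eq, Nat.card_zpowers]
    haveI : Fact (Nat.Prime 2) := ⟨by norm_num⟩
    refine orderOf_eq_prime ?_ (by decide)
    rw [pow_two]
    decide
  -- part (i)
  have hpart1 : ∀ x : ProjLine, Subgroup.center (DihedralGroup 6) ≤ stabilizerThrough φ x := by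
    intro x g hg
    have hgker : g ∈ φ.ker := by rw [hker]; exact hg
    show φ g • x = x
    rw [MonoidHom.mem_ker.mp hgker, one_smul]
  -- fixedness under powers
  have hpow_fix : ∀ (c : PGL2C) (y : ProjLine), c • y = y → ∀ n : ℕ, c ^ n • y = y := by
    intro c y hc n
    induction n with
    | zero => simp
    | succ n ih => rw [pow_succ, mul_smul, hc]; exact ih
  have hzpow_fix : ∀ (c : PGL2C) (y : ProjLine), c • y = y → ∀ k : ℤ, c ^ k • y = y := by
    intro c y hc k
    induction k using Int.rec with
    | ofNat n => rw [Int.ofNat_eq_coe, zpow_natCast]; exact hpow_fix c y hc n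
    | negSucc n =>
      rw [zpow_negSucc]
      exact inv_smul_eq_iff.mpr (hpow_fix c y hc (n + 1)).symm
  have hr_fix : ∀ (i : ZMod 6) (y : ProjLine), φ (.r 1) • y = y → φ (.r i) • y = y := by
    intro i y hy
    have h1 : (DihedralGroup.r i : DihedralGroup 6) = (.r 1) ^ i.val := by
      rw [DihedralGroup.r_one_pow]
      congr 1
      exact (ZMod.natCast_rightInverse i).symm
    rw [h1, _root_.map_pow]
    exact hpow_fix _ _ hy i.val
  have hsr_eq : ∀ i : ZMod 6, (DihedralGroup.sr i : DihedralGroup 6) = .sr 0 * .r i := by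
    intro i; rw [DihedralGroup.sr_mul_r, zero_add]
  have hap : φ (.r 1) • p = p := (hfix p).mpr (Or.inl rfl)
  have haq : φ (.r 1) • q = q := (hfix q).mpr (Or.inr rfl)
  have hsrp : ∀ i : ZMod 6, φ (.sr i) • p = q := by
    intro i
    rw [hsr_eq i, _root_.map_mul, mul_smul, hr_fix i p hap, hbp]
  have hsrq : ∀ i : ZMod 6, φ (.sr i) • q = p := by
    intro i
    rw [hsr_eq i, _root_.map_mul, mul_smul, hr_fix i q haq, hbq]
  -- the two orbits through p and q
  have horb_p : orbitThrough φ p = {p, q} := by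
    ext u
    simp only [orbitThrough, Set.mem_range, Set.mem_insert_iff, Set.mem_singleton_iff]
    constructor
    · rintro ⟨g, rfl⟩
      cases g with
      | r i => exact Or.inl (hr_fix i p hap)
      | sr i => exact Or.inr (hsrp i)
    · rintro (rfl | rfl)
      · exact ⟨1, by rw [_root_.map_one, one_smul]⟩
      · exact ⟨.sr 0, hbp⟩
  have horb_q : orbitThrough φ q = {p, q} := by
    ext u
    simp only [orbitThrough, Set.mem_range, Set.mem_insert_iff, Set.mem_singleton_iff]
    constructor
    · rintro ⟨g, rfl⟩
      cases g with
      | r i => exact Or.inr (hr_fix i q haq)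
      | sr i => exact Or.inl (hsrq i)
    · rintro (rfl | rfl)
      · exact ⟨.sr 0, hbq⟩
      · exact ⟨1, by rw [_root_.map_one, one_smul]⟩
  -- stabilizers of p and q
  have hstab_p : stabilizerThrough φ p = Subgroup.zpowers (DihedralGroup.r 1) := by
    ext g
    constructor
    · intro hg
      have hg' : φ g • p = p := hg
      cases g with
      | r i =>
        refine ⟨(i.val : ℤ), ?_⟩
        show (DihedralGroup.r 1 : DihedralGroup 6) ^ ((i.val : ℕ) : ℤ) = DihedralGroup.r i
        rw [zpow_natCast, DihedralGroup.r_one_pow]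
        congr 1
        exact ZMod.natCast_rightInverse i
      | sr i => exact absurd ((hsrp i).symm.trans hg') hpq.symm
    · intro hg
      rcases Subgroup.mem_zpowers_iff.mp hg with ⟨k, rfl⟩
      show φ ((DihedralGroup.r 1) ^ k) • p = p
      rw [map_zpow]
      exact hzpow_fix _ _ hap k
  have hstab_q : stabilizerThrough φ q = Subgroup.zpowers (DihedralGroup.r 1) := by
    ext g
    constructor
    · intro hg
      have hg' : φ g • q = q := hg
      cases g with
      | r i =>
        refine ⟨(i.val : ℤ), ?_⟩
        show (DihedralGroup.r 1 : DihedralGroup 6) ^ ((i.val : ℕ) : ℤ) = DihedralGroup.r i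
        rw [zpow_natCast, DihedralGroup.r_one_pow]
        congr 1
        exact ZMod.natCast_rightInverse i
      | sr i => exact absurd ((hsrq i).symm.trans hg') hpq
    · intro hg
      rcases Subgroup.mem_zpowers_iff.mp hg with ⟨k, rfl⟩
      show φ ((DihedralGroup.r 1) ^ k) • q = q
      rw [map_zpow]
      exact hzpow_fix _ _ haq k
  -- orbit-stabilizer
  have hos : ∀ x : ProjLine,
      (orbitThrough φ x).ncard * Nat.card (stabilizerThrough φ x) = 12 := by
    intro x
    letI act : MulAction (DihedralGroup 6) ProjLine := MulAction.compHom _ φ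
    have h1 : orbitThrough φ x = MulAction.orbit (DihedralGroup 6) x := rfl
    have h2 : stabilizerThrough φ x = MulAction.stabilizer (DihedralGroup 6) x := rfl
    rw [h1, h2, ← Nat.card_coe_set_eq,
      Nat.card_congr (MulAction.orbitEquivQuotientStabilizer _ x),
      ← Subgroup.index_eq_card, Subgroup.index_mul_card,
      Nat.card_eq_fintype_card, DihedralGroup.card]
  -- an orbit of cardinality 2 passes through p or q
  have hmem2 : ∀ x : ProjLine, (orbitThrough φ x).ncard = 2 → x = p ∨ x = q := by
    intro x h2
    have hs6 : Nat.card (stabilizerThrough φ x) = 6 := by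
      have h := hos x; rw [h2] at h; omega
    haveI : Fact (Nat.Prime 3) := ⟨by norm_num⟩
    haveI : Fintype (stabilizerThrough φ x) := Fintype.ofFinite _
    have h3dvd : 3 ∣ Fintype.card (stabilizerThrough φ x) := by
      rw [← Nat.card_eq_fintype_card, hs6]; norm_num
    obtain ⟨g0, hg0⟩ := exists_prime_orderOf_dvd_card 3 h3dvd
    have hordg : orderOf (g0 : DihedralGroup 6) = 3 := by
      rw [Subgroup.orderOf_coe]; exact hg0
    have hg3 : (g0 : DihedralGroup 6) * g0 * g0 = 1 := by
      have h := pow_orderOf_eq_one (g0 : DihedralGroup 6)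
      rw [hordg] at h
      calc (g0 : DihedralGroup 6) * g0 * g0 = (g0 : DihedralGroup 6) ^ 3 := by rw [pow_succ, pow_two]
      _ = 1 := h
    have hgne : (g0 : DihedralGroup 6) ≠ 1 := by
      intro h; rw [h] at hordg; simp at hordg
    have hcases : (g0 : DihedralGroup 6) = .r 2 ∨ (g0 : DihedralGroup 6) = .r 4 := by
      have hdec : ∀ g : DihedralGroup 6, g * g * g = 1 → g ≠ 1 → g = .r 2 ∨ g = .r 4 := by
        decide
      exact hdec _ hg3 hgne
    have hfixg : φ ((g0 : DihedralGroup 6)) • x = x := g0.property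
    have h1fix : φ (.r 1) • x = x := by
      rcases hcases with h | h
      · have he : (DihedralGroup.r 1 : DihedralGroup 6) = .r 2 * .r 2 * .r 3 := by decide
        rw [h] at hfixg
        rw [he, _root_.map_mul, _root_.map_mul, hφr3, mul_one, mul_smul,
          hfixg, hfixg]
      · have he : (DihedralGroup.r 1 : DihedralGroup 6) = .r 4 * .r 3 := by decide
        rw [h] at hfixg
        rw [he, _root_.map_mul, hφr3, mul_one, hfixg]
    exact (hfix x).mp h1fix
  refine ⟨hpart1, ?_, ?_, ?_⟩
  · -- exactly one orbit of cardinality 2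
    refine ⟨{p, q}, ⟨⟨p, horb_p.symm⟩, Set.ncard_pair hpq⟩, ?_⟩
    rintro O ⟨⟨x, rfl⟩, h2⟩
    rcases hmem2 x h2 with rfl | rfl
    · exact horb_p
    · exact horb_q
  · -- orbits of cardinality 2 have cyclic stabilizers of order 6
    intro x h2
    rcases hmem2 x h2 with rfl | rfl
    · rw [hstab_p]
      exact ⟨isCyclic_zpowers' _,
        by rw [Nat.card_zpowers, DihedralGroup.orderOf_r_one]⟩
    · rw [hstab_q]
      exact ⟨isCyclic_zpowers' _,
        by rw [Nat.card_zpowers, DihedralGroup.orderOf_r_one]⟩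
  · -- orbits of cardinality 6 have stabilizer equal to the center
    intro x h6
    have hs2 : Nat.card (stabilizerThrough φ x) = 2 := by
      have h := hos x; rw [h6] at h; omega
    have heq : Subgroup.center (DihedralGroup 6) = stabilizerThrough φ x := by
      apply Subgroup.eq_of_le_of_card_ge (hpart1 x)
      rw [hs2, hcard_center]
    exact ⟨hs2, heq.symm⟩

end
end

section
/- For every injective group homomorphism φ from the dihedral group D₆ of order 12 into GL₂(ℤ), the image under φ of the nontrivial central element of D₆ is the scalar matrix −I; moreover, an element g of D₆ satisfies that φ(g) is a scalar matrix if and only if g lies in the center of D₆. -/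
private lemma key_entries (a b c d p q r s p' q' r' s' : ℤ)
    (hns : b ≠ 0 ∨ c ≠ 0 ∨ a ≠ d)
    (e1 : b*r = c*q) (e2 : a*q + b*s = p*b + q*d) (e3 : c*p + d*r = r*a + s*c)
    (f1 : b*r' = c*q') (f2 : a*q' + b*s' = p'*b + q'*d) (f3 : c*p' + d*r' = r'*a + s'*c) :
    q*r' = q'*r ∧ p*q' + q*s' = p'*q + q'*s ∧ r*p' + s*r' = r'*p + s'*r := by
  have g2 : (a-d)*q = b*(p-s) := by linarith
  have g3 : (a-d)*r = c*(p-s) := by linarith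
  have g2' : (a-d)*q' = b*(p'-s') := by linarith
  have g3' : (a-d)*r' = c*(p'-s') := by linarith
  have hZ : q*r' = q'*r := by
    rcases hns with hb | hc | had
    · have h : b*(q*r' - q'*r) = 0 := by linear_combination q*f1 - q'*e1
      rcases mul_eq_zero.1 h with h | h
      · exact absurd h hb
      · linarith
    · have h : c*(q*r' - q'*r) = 0 := by linear_combination r*f1 - r'*e1
      rcases mul_eq_zero.1 h with h | h
      · exact absurd h hc
      · linarith
    · have h : (a-d)*((a-d)*(q*r' - q'*r)) = 0 := by
        linear_combination ((a-d)*r')*g2 + (b*(p-s))*g3' - ((a-d)*r)*g2' - (b*(p'-s'))*g3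
      have had' : a - d ≠ 0 := sub_ne_zero.2 had
      rcases mul_eq_zero.1 h with h | h
      · exact absurd h had'
      rcases mul_eq_zero.1 h with h | h
      · exact absurd h had'
      · linarith
  refine ⟨hZ, ?_, ?_⟩
  · rcases eq_or_ne b 0 with hb | hb
    · rcases eq_or_ne c 0 with hc | hc
      · have had : a ≠ d := by rcases hns with h|h|h <;> first | exact absurd hb h | exact absurd hc h | exact h
        have had' : a - d ≠ 0 := sub_ne_zero.2 had
        have hq : q = 0 := by
          have : (a-d)*q = 0 := by rw [g2, hb]; ring
          rcases mul_eq_zero.1 this with h|h; exact absurd h had'; exact h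
        have hq' : q' = 0 := by
          have : (a-d)*q' = 0 := by rw [g2', hb]; ring
          rcases mul_eq_zero.1 this with h|h; exact absurd h had'; exact h
        rw [hq, hq']; ring
      · have h : c*(p*q' + q*s' - (p'*q + q'*s)) = 0 := by
          linear_combination q*g3' - q'*g3 - (a-d)*hZ
        rcases mul_eq_zero.1 h with h | h
        · exact absurd h hc
        · linarith
    · have h : b*(p*q' + q*s' - (p'*q + q'*s)) = 0 := by linear_combination q*g2' - q'*g2
      rcases mul_eq_zero.1 h with h | h
      · exact absurd h hb
      · linarith
  · rcases eq_or_ne c 0 with hc | hc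
    · rcases eq_or_ne b 0 with hb | hb
      · have had : a ≠ d := by rcases hns with h|h|h <;> first | exact absurd hb h | exact absurd hc h | exact h
        have had' : a - d ≠ 0 := sub_ne_zero.2 had
        have hr : r = 0 := by
          have : (a-d)*r = 0 := by rw [g3, hc]; ring
          rcases mul_eq_zero.1 this with h|h; exact absurd h had'; exact h
        have hr' : r' = 0 := by
          have : (a-d)*r' = 0 := by rw [g3', hc]; ring
          rcases mul_eq_zero.1 this with h|h; exact absurd h had'; exact h
        rw [hr, hr']; ring
      · have h : b*(r*p' + s*r' - (r'*p + s'*r)) = 0 := by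
          linear_combination r'*g2 - r*g2' - (a-d)*hZ
        rcases mul_eq_zero.1 h with h | h
        · exact absurd h hb
        · linarith
    · have h : c*(r*p' + s*r' - (r'*p + s'*r)) = 0 := by linear_combination r'*g3 - r*g3'
      rcases mul_eq_zero.1 h with h | h
      · exact absurd h hc
      · linarith

/-- If `M` is a non-scalar 2×2 integer matrix, any two matrices commuting with `M`
commute with each other. -/
private lemma comm_of_comm_nonscalar {M B C : Matrix (Fin 2) (Fin 2) ℤ}
    (hns : M 0 1 ≠ 0 ∨ M 1 0 ≠ 0 ∨ M 0 0 ≠ M 1 1)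
    (hB : M * B = B * M) (hC : M * C = C * M) : B * C = C * B := by
  have eB : ∀ i j, (M * B) i j = (B * M) i j := fun i j => by rw [hB]
  have eC : ∀ i j, (M * C) i j = (C * M) i j := fun i j => by rw [hC]
  simp only [Matrix.mul_apply, Fin.sum_univ_two] at eB eC
  have e00 := eB 0 0; have e01 := eB 0 1; have e10 := eB 1 0
  have f00 := eC 0 0; have f01 := eC 0 1; have f10 := eC 1 0
  obtain ⟨h1, h2, h3⟩ := key_entries (M 0 0) (M 0 1) (M 1 0) (M 1 1)
    (B 0 0) (B 0 1) (B 1 0) (B 1 1) (C 0 0) (C 0 1) (C 1 0) (C 1 1)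
    hns (by linarith) e01 e10 (by linarith) f01 f10
  ext i j
  fin_cases i <;> fin_cases j <;>
    simp only [Matrix.mul_apply, Fin.sum_univ_two, Fin.mk_zero, Fin.mk_one] <;> linarith


/-- For every injective group homomorphism `φ` from the dihedral group
`D₆` of order 12 into `GL₂(ℤ)`, the image under `φ` of the nontrivial central element of
`D₆` is the scalar matrix `-I`; moreover, an element `g` of `D₆` satisfies that `φ g` is
a scalar matrix if and only if `g` lies in the center of `D₆`. -/
theorem dihedral_six_in_GL2Z_center_maps_to_neg_one
    (φ : DihedralGroup 6 →* Matrix.GeneralLinearGroup (Fin 2) ℤ)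
    (hφ : Function.Injective φ) :
    (∀ g : DihedralGroup 6, g ∈ Subgroup.center (DihedralGroup 6) → g ≠ 1 →
      φ g = -1) ∧
    (∀ g : DihedralGroup 6,
      (∃ c : ℤ, (φ g : Matrix (Fin 2) (Fin 2) ℤ) = c • (1 : Matrix (Fin 2) (Fin 2) ℤ)) ↔
        g ∈ Subgroup.center (DihedralGroup 6)) := by
  -- scalar image implies central
  have scalar_central : ∀ g : DihedralGroup 6,
      (∃ c : ℤ, (φ g : Matrix (Fin 2) (Fin 2) ℤ) = c • (1 : Matrix (Fin 2) (Fin 2) ℤ)) →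
      g ∈ Subgroup.center (DihedralGroup 6) := by
    intro g ⟨c, hc⟩
    rw [Subgroup.mem_center_iff]
    intro h
    apply hφ
    rw [map_mul, map_mul]
    apply Units.ext
    push_cast
    rw [hc, Matrix.smul_mul, Matrix.mul_smul, one_mul, mul_one]
  -- φ (r 3) is scalar
  have hcomm : ∀ x : DihedralGroup 6,
      (φ (DihedralGroup.r 3) : Matrix (Fin 2) (Fin 2) ℤ) * (φ x : Matrix (Fin 2) (Fin 2) ℤ)
        = (φ x : Matrix (Fin 2) (Fin 2) ℤ) * (φ (DihedralGroup.r 3) : Matrix (Fin 2) (Fin 2) ℤ) := by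
    intro x
    have : DihedralGroup.r (3 : ZMod 6) * x = x * DihedralGroup.r 3 := by
      revert x; decide
    calc (φ (DihedralGroup.r 3) : Matrix (Fin 2) (Fin 2) ℤ) * (φ x : Matrix (Fin 2) (Fin 2) ℤ)
        = ((φ (DihedralGroup.r 3) * φ x : Matrix.GeneralLinearGroup (Fin 2) ℤ) : Matrix (Fin 2) (Fin 2) ℤ) := rfl
      _ = ((φ x * φ (DihedralGroup.r 3) : Matrix.GeneralLinearGroup (Fin 2) ℤ) : Matrix (Fin 2) (Fin 2) ℤ) := by
          rw [← map_mul, ← map_mul, this]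
      _ = _ := rfl
  set M : Matrix (Fin 2) (Fin 2) ℤ := (φ (DihedralGroup.r 3) : Matrix (Fin 2) (Fin 2) ℤ) with hMdef
  have hMscalar : M 0 1 = 0 ∧ M 1 0 = 0 ∧ M 0 0 = M 1 1 := by
    by_contra hns
    have hns' : M 0 1 ≠ 0 ∨ M 1 0 ≠ 0 ∨ M 0 0 ≠ M 1 1 := by tauto
    have hBC := comm_of_comm_nonscalar hns' (hcomm (DihedralGroup.r 1)) (hcomm (DihedralGroup.sr 0))
    have : φ (DihedralGroup.r 1) * φ (DihedralGroup.sr 0)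
        = φ (DihedralGroup.sr 0) * φ (DihedralGroup.r 1) := Units.ext hBC
    rw [← map_mul, ← map_mul] at this
    have := hφ this
    revert this; decide
  obtain ⟨h01, h10, hdiag⟩ := hMscalar
  -- M * M = 1
  have hM2 : M * M = 1 := by
    have h1 : DihedralGroup.r (3 : ZMod 6) * DihedralGroup.r 3 = 1 := by decide
    have : φ (DihedralGroup.r 3) * φ (DihedralGroup.r 3) = 1 := by
      rw [← map_mul, h1, map_one]
    calc M * M = ((φ (DihedralGroup.r 3) * φ (DihedralGroup.r 3) :
        Matrix.GeneralLinearGroup (Fin 2) ℤ) : Matrix (Fin 2) (Fin 2) ℤ) := rfl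
      _ = 1 := by rw [this]; rfl
  have ha2 : M 0 0 * M 0 0 = 1 := by
    have := congrFun (congrFun hM2 0) 0
    simp only [Matrix.mul_apply, Fin.sum_univ_two, Matrix.one_apply_eq] at this
    rw [h01] at this; linarith
  have hMval : M = (M 0 0) • (1 : Matrix (Fin 2) (Fin 2) ℤ) := by
    ext i j
    fin_cases i <;> fin_cases j <;>
      simp [Matrix.one_apply, h01, h10, hdiag.symm]
  have ha : M 0 0 = 1 ∨ M 0 0 = -1 := by
    have : (M 0 0 - 1) * (M 0 0 + 1) = 0 := by linear_combination ha2
    rcases mul_eq_zero.1 this with h | h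
    · left; linarith
    · right; linarith
  have hne1 : M 0 0 ≠ 1 := by
    intro h1
    have hMone : M = 1 := by rw [hMval, h1, one_smul]
    have : φ (DihedralGroup.r 3) = 1 := Units.ext (by rw [← hMdef, hMone]; rfl)
    have : DihedralGroup.r (3 : ZMod 6) = 1 := hφ (by rw [this, map_one])
    revert this; decide
  have haneg : M 0 0 = -1 := by tauto
  have hφr3 : φ (DihedralGroup.r 3) = -1 := by
    apply Units.ext
    show M = ((-1 : Matrix.GeneralLinearGroup (Fin 2) ℤ) : Matrix (Fin 2) (Fin 2) ℤ)
    rw [Units.val_neg, Units.val_one, hMval, haneg, neg_smul, one_smul]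
  constructor
  · intro g hg hg1
    have hg' : ∀ h, h * g = g * h := Subgroup.mem_center_iff.1 hg
    have : g = DihedralGroup.r 3 := by
      revert hg' hg1; revert g; decide
    rw [this, hφr3]
  · intro g
    constructor
    · exact scalar_central g
    · intro hg
      have hg' : ∀ h, h * g = g * h := Subgroup.mem_center_iff.1 hg
      have : g = 1 ∨ g = DihedralGroup.r 3 := by
        revert hg'; revert g; decide
      rcases this with h | h
      · exact ⟨1, by rw [h, map_one, one_smul]; rfl⟩
      · exact ⟨-1, by rw [h, hφr3, neg_smul, one_smul, Units.val_neg, Units.val_one]⟩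
end

section
/- Any two elements of order 6 in GL₂(ℤ) are conjugate in GL₂(ℤ). -/
lemma repAux : ∀ n : ℕ, ∀ P B R : ℤ, P.natAbs ≤ n → 0 < P → B^2 - 4*P*R = -3 →
    ∃ x y : ℤ, P*x^2 + B*x*y + R*y^2 = 1 := by
  intro n
  induction n with
  | zero => intro P B R hn hP _; omega
  | succ n ih =>
    intro P B R hn hP hD
    obtain ⟨k, B', hB', hlo, hhi⟩ : ∃ k B', B' = B + 2*P*k ∧ -P ≤ B' ∧ B' ≤ P := by
      set q0 := B / (2*P) with hq0
      set r0 := B % (2*P) with hr0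
      have hdiv : 2*P * q0 + r0 = B := Int.mul_ediv_add_emod B (2*P)
      have h0 : 0 ≤ r0 := Int.emod_nonneg B (by positivity)
      have h1 : r0 < 2*P := Int.emod_lt_of_pos B (by positivity)
      rcases le_or_gt r0 P with h | h
      · exact ⟨-q0, r0, by linarith, by linarith, h⟩
      · exact ⟨-(q0+1), r0 - 2*P, by linarith, by linarith, by linarith⟩
    set R' : ℤ := P*k^2 + B*k + R with hR'
    have hdisc' : B'^2 - 4*P*R' = -3 := by rw [hB', hR']; linear_combination hD
    have hsq : B'^2 ≤ P^2 := sq_le_sq' hlo hhi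
    have hR'pos : 0 < R' := by nlinarith [sq_nonneg B']
    rcases lt_or_ge R' P with h | h
    · obtain ⟨x, y, hxy⟩ := ih R' B' P (by omega) hR'pos (by linear_combination hdisc')
      exact ⟨y + k*x, x, by rw [hB', hR'] at hxy; linear_combination hxy⟩
    · have hP1 : P = 1 := by nlinarith
      exact ⟨1, 0, by rw [hP1]; ring⟩

lemma repOne (P B R : ℤ) (hP : 0 < P) (hD : B^2 - 4*P*R = -3) :
    ∃ x y : ℤ, P*x^2 + B*x*y + R*y^2 = 1 :=
  repAux P.natAbs P B R le_rfl hP hD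

lemma keyAux (p q r s t d X : ℤ) (ht : t = p+s) (hdd : d = p*s-q*r)
    (hX : X = t*(t^2-d)*(t^2-3*d)) (hd : d = 1 ∨ d = -1)
    (E2 : X*q = 0) (E3 : X*r = 0) (E14 : X*p = X*s) :
    (t = 1 ∧ d = 1) ∨ (q = 0 ∧ r = 0 ∧ p = s ∧ p*p = 1) ∨
    (t = 0 ∧ d = 1) ∨ (t = -1 ∧ d = 1) ∨ (t = 0 ∧ d = -1) := by
  by_cases hX0 : X = 0
  · rcases hd with hd1 | hdm
    · subst hd1
      rw [hX] at hX0
      have htv : t = 0 ∨ t = 1 ∨ t = -1 := by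
        rcases mul_eq_zero.mp hX0 with h | h
        · rcases mul_eq_zero.mp h with h | h
          · exact Or.inl h
          · have h2 : (t-1)*(t+1) = 0 := by linear_combination h
            rcases mul_eq_zero.mp h2 with h3 | h3
            · exact Or.inr (Or.inl (by linarith))
            · exact Or.inr (Or.inr (by linarith))
        · exfalso
          have ht3 : t^2 = 3 := by linarith
          have h1 : t ≤ 1 := by nlinarith [sq_nonneg (t-2)]
          have h2 : -1 ≤ t := by nlinarith [sq_nonneg (t+2)]
          interval_cases t <;> omega
      rcases htv with h | h | h
      · exact Or.inr (Or.inr (Or.inl ⟨h, rfl⟩))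
      · exact Or.inl ⟨h, rfl⟩
      · exact Or.inr (Or.inr (Or.inr (Or.inl ⟨h, rfl⟩)))
    · subst hdm
      rw [hX] at hX0
      have ht0 : t = 0 := by
        rcases mul_eq_zero.mp hX0 with h | h
        · rcases mul_eq_zero.mp h with h | h
          · exact h
          · nlinarith [sq_nonneg t]
        · nlinarith [sq_nonneg t]
      exact Or.inr (Or.inr (Or.inr (Or.inr ⟨ht0, rfl⟩)))
  · have hq0 : q = 0 := by
      rcases mul_eq_zero.mp E2 with h | h
      · exact absurd h hX0
      · exact h
    have hr0 : r = 0 := by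
      rcases mul_eq_zero.mp E3 with h | h
      · exact absurd h hX0
      · exact h
    have hps : p = s := by
      have h : X*(p - s) = 0 := by linear_combination E14
      rcases mul_eq_zero.mp h with h | h
      · exact absurd h hX0
      · linarith
    have hpp : p*p = 1 := by
      rcases hd with h | h
      · rw [hdd, hq0, ← hps] at h; linear_combination h
      · exfalso; rw [hdd, hq0, ← hps] at h; nlinarith [sq_nonneg p]
    exact Or.inr (Or.inl ⟨hq0, hr0, hps, hpp⟩)

lemma conj_C (a : Matrix.GeneralLinearGroup (Fin 2) ℤ) (ha : orderOf a = 6) :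
    IsConj (⟨!![0,-1;1,1], !![1,1;-1,0],
      by norm_num [Matrix.mul_fin_two, Matrix.one_fin_two.symm],
      by norm_num [Matrix.mul_fin_two, Matrix.one_fin_two.symm]⟩ :
        Matrix.GeneralLinearGroup (Fin 2) ℤ) a := by
  set A : Matrix (Fin 2) (Fin 2) ℤ := (a : Matrix (Fin 2) (Fin 2) ℤ) with hAdef
  set p := A 0 0 with hp; set q := A 0 1 with hq
  set r := A 1 0 with hr; set s := A 1 1 with hs
  have h6 : a^6 = 1 := by rw [← ha]; exact pow_orderOf_eq_one a
  have hne : ∀ m : ℕ, 0 < m → m < 6 → a^m ≠ 1 := by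
    intro m hm0 hm6 hme
    have h := orderOf_dvd_of_pow_eq_one hme
    rw [ha] at h
    omega
  have hA6 : A^6 = 1 := by
    have h := congrArg Units.val h6
    rwa [Units.val_pow_eq_pow_val, Units.val_one] at h
  have hpow : ∀ m : ℕ, A^m = 1 → a^m = 1 := by
    intro m hAm
    apply Units.ext
    rw [Units.val_pow_eq_pow_val, Units.val_one]
    exact hAm
  have hd : p*s - q*r = 1 ∨ p*s - q*r = -1 := by
    have h : IsUnit A.det := (Matrix.isUnit_iff_isUnit_det _).mp a.isUnit
    rw [Matrix.det_fin_two] at h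
    exact Int.isUnit_iff.mp h
  have e00 := Matrix.ext_iff.mpr hA6 0 0
  have e01 := Matrix.ext_iff.mpr hA6 0 1
  have e10 := Matrix.ext_iff.mpr hA6 1 0
  have e11 := Matrix.ext_iff.mpr hA6 1 1
  simp [pow_succ, Matrix.mul_apply, Fin.sum_univ_two] at e00 e01 e10 e11
  have hkey := keyAux p q r s (p+s) (p*s - q*r)
    ((p+s)*((p+s)^2-(p*s-q*r))*((p+s)^2-3*(p*s-q*r))) rfl rfl rfl hd
    (by linear_combination e01) (by linear_combination e10) (by linear_combination e00 - e11)
  rcases hkey with ⟨ht1, hd1⟩ | ⟨hq0, hr0, hps, hpp⟩ | ⟨ht0, hd1⟩ | ⟨htm, hd1⟩ | ⟨ht0, hdm⟩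
  · -- main case : trace 1, det 1
    -- r ≠ 0
    have hrne : r ≠ 0 := by
      intro h
      rw [h] at hd1
      nlinarith [sq_nonneg (2*p - 1), ht1, hd1]
    obtain ⟨x, y, e, he, hform⟩ :
        ∃ x y e : ℤ, (e = 1 ∨ e = -1) ∧ r*x^2 + (s-p)*x*y + (-q)*y^2 = e := by
      rcases lt_or_gt_of_ne hrne with hneg | hpos
      · obtain ⟨x, y, hxy⟩ := repOne (-r) (p-s) q (by linarith)
          (by linear_combination (p+s+1)*ht1 - 4*hd1)
        exact ⟨x, y, -1, Or.inr rfl, by linear_combination -hxy⟩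
      · obtain ⟨x, y, hxy⟩ := repOne r (s-p) (-q) hpos
          (by linear_combination (p+s+1)*ht1 - 4*hd1)
        exact ⟨x, y, 1, Or.inl rfl, hxy⟩
    set Pm : Matrix (Fin 2) (Fin 2) ℤ := !![x, p*x+q*y; y, r*x+s*y] with hPm
    have hPdet : Pm.det = e := by
      rw [hPm, Matrix.det_fin_two_of]
      linear_combination hform
    have hPu : IsUnit Pm := by
      rw [Matrix.isUnit_iff_isUnit_det, hPdet]
      exact Int.isUnit_iff.mpr he
    have hcomm : Pm * !![(0:ℤ),-1;1,1] = A * Pm := by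
      ext i j
      fin_cases i <;> fin_cases j <;>
        simp [hPm, Matrix.mul_apply, Fin.sum_univ_two, ← hp, ← hq, ← hr, ← hs]
      · linear_combination -x*(p*ht1 - hd1) - y*q*ht1
      · linear_combination -x*r*ht1 - y*(s*ht1 - hd1)
    rw [isConj_iff]
    refine ⟨hPu.unit, ?_⟩
    rw [mul_inv_eq_iff_eq_mul]
    apply Units.ext
    rw [Units.val_mul, Units.val_mul, IsUnit.unit_spec]
    exact hcomm
  · -- scalar case
    exfalso
    have hAA : A*A = 1 := by
      ext i j
      fin_cases i <;> fin_cases j <;>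
        simp [Matrix.mul_apply, Fin.sum_univ_two, Matrix.one_apply]
      · linear_combination r*hq0 + hpp
      · linear_combination (p+s)*hq0
      · linear_combination (p+s)*hr0
      · linear_combination q*hr0 + hpp - (s+p)*hps
    exact hne 2 (by norm_num) (by norm_num) (hpow 2 (by rw [pow_two]; exact hAA))
  · -- t = 0, d = 1 : A^2 = -1
    exfalso
    have hAA : A*A = -1 := by
      ext i j
      fin_cases i <;> fin_cases j <;>
        simp [Matrix.mul_apply, Fin.sum_univ_two, Matrix.one_apply]
      · linear_combination p*ht0 - hd1
      · linear_combination q*ht0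
      · linear_combination r*ht0
      · linear_combination s*ht0 - hd1
    have hA4 : A^4 = 1 := by
      have h : A^4 = (A*A)*(A*A) := by noncomm_ring
      rw [h, hAA]; norm_num
    exact hne 4 (by norm_num) (by norm_num) (hpow 4 hA4)
  · -- t = -1, d = 1 : A^3 = 1
    exfalso
    have hAA : A*A = -A - 1 := by
      ext i j
      fin_cases i <;> fin_cases j <;>
        simp [Matrix.mul_apply, Fin.sum_univ_two, Matrix.one_apply, Matrix.neg_apply,
          Matrix.sub_apply]
      · linear_combination p*htm - hd1
      · linear_combination q*htm
      · linear_combination r*htm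
      · linear_combination s*htm - hd1
    have hA3 : A^3 = 1 := by
      have h2 : A^3 = (A*A)*A := by noncomm_ring
      rw [h2, hAA]
      have h3 : (-A - 1) * A = -(A*A) - A := by noncomm_ring
      rw [h3, hAA]
      noncomm_ring
    exact hne 3 (by norm_num) (by norm_num) (hpow 3 hA3)
  · -- t = 0, d = -1 : A^2 = 1
    exfalso
    have hAA : A*A = 1 := by
      ext i j
      fin_cases i <;> fin_cases j <;>
        simp [Matrix.mul_apply, Fin.sum_univ_two, Matrix.one_apply]
      · linear_combination p*ht0 - hdm
      · linear_combination q*ht0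
      · linear_combination r*ht0
      · linear_combination s*ht0 - hdm
    exact hne 2 (by norm_num) (by norm_num) (hpow 2 (by rw [pow_two]; exact hAA))

/-- Any two elements of order 6 in `GL₂(ℤ)` are conjugate in `GL₂(ℤ)`. -/
theorem order_six_elements_conjugate_in_GL2Z
    (a b : Matrix.GeneralLinearGroup (Fin 2) ℤ)
    (ha : orderOf a = 6) (hb : orderOf b = 6) :
    IsConj a b := by
  exact (conj_C a ha).symm.trans (conj_C b hb)
end
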